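/- arXiv:2501.17249 — 6 statements merged into one kernel-verified Lean document; each statement's English description precedes it below -/
import Mathlib

section
/- Let L, M be root subspaces of H_n. The intersection L ∩ M is a root subspace if and only if every cycle of length at least four in the graph union Γ_L ∪ Γ_M has a chord. -/
/-- The root `e_i - e_j` in `ℝ^n`. -/
def rootVec (n : ℕ) (i j : Fin n) : Fin n → ℝ :=
  Pi.single i 1 - Pi.single j 1

/-- A root subspace: a linear subspace spanned by a set of roots `e_i - e_j`. -/
def IsRootSubspace {n : ℕ} (L : Submodule ℝ (Fin n → ℝ)) : Prop :=
  ∃ A : Set (Fin n → ℝ),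
    (∀ v ∈ A, ∃ i j : Fin n, i ≠ j ∧ v = rootVec n i j) ∧ L = Submodule.span ℝ A

/-!
Write `i ~_N j` when `e_i - e_j ∈ N`, an equivalence relation whose graph is `Γ_N`; a subspace `N`
is a root subspace iff it is spanned by the roots it contains. The coordinates of a combination of
roots of `N` sum to zero over each class of `~_N`.

If `Γ_L ∪ Γ_M` has a chordless cycle `v = p₀, p₁, …, p_k = v` with `k ≥ 4`, the sum `u` of its
`L`-edges `e_{pᵢ} - e_{pᵢ₊₁}` lies in `L`, and also in `M`, because the whole cycle telescopes to
`0` and its other edges lie in `M`. No other vertex of the cycle is `~_{L ∩ M}`-related to `v`,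
and the two edges at `v` are of different kinds, so the coordinates of `u` sum to `±1` over the
`~_{L ∩ M}`-class of `v`: `u` is not a combination of roots of `L ∩ M`.

Conversely, let `x ∈ L ∩ M` with support `S`. If some `i ∈ S` is a leaf, i.e. all its
`L`-neighbours in `S` are `M`-neighbours (or vice versa), the restriction of `x` to the `L`-class
of `i` is a combination of the roots `e_j - e_i` of `L ∩ M`, and subtracting it shrinks the
support. Without leaves one could walk through `S` alternating between steps that are only
`L`-edges and steps that are only `M`-edges, and a shortest closed walk of this kind is a
chordless cycle of length at least `4`.
-/

open Finset Submodule SimpleGraph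
open scoped Classical

section Roots

variable {n : ℕ}

theorem rootVec_self (i : Fin n) : rootVec n i i = 0 := sub_self _

theorem rootVec_add_rootVec (i j k : Fin n) : rootVec n i j + rootVec n j k = rootVec n i k := by
  simp [rootVec]

theorem rootVec_swap (i j : Fin n) : rootVec n j i = -rootVec n i j := by
  simp [rootVec]

theorem sum_rootVec_apply (C : Finset (Fin n)) (i j : Fin n) :
    ∑ l ∈ C, rootVec n i j l = (if i ∈ C then 1 else 0) - (if j ∈ C then 1 else 0) := by
  simp [rootVec, sum_sub_distrib, sum_pi_single']

/-- The relation `i ~_N j` whose graph is `Γ_N`. -/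
def RootRel (N : Submodule ℝ (Fin n → ℝ)) (i j : Fin n) : Prop := rootVec n i j ∈ N

theorem rootRel_equivalence (N : Submodule ℝ (Fin n → ℝ)) : Equivalence (RootRel N) where
  refl i := by simp [RootRel, rootVec_self]
  symm h := by rw [RootRel, rootVec_swap]; exact N.neg_mem h
  trans h₁ h₂ := by rw [RootRel, ← rootVec_add_rootVec]; exact N.add_mem h₁ h₂

noncomputable def rootClass (N : Submodule ℝ (Fin n → ℝ)) (i : Fin n) : Finset (Fin n) :=
  univ.filter (RootRel N i)

theorem mem_rootClass {N : Submodule ℝ (Fin n → ℝ)} {i j : Fin n} :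
    j ∈ rootClass N i ↔ RootRel N i j := by
  simp [rootClass]

def rootsIn (N : Submodule ℝ (Fin n → ℝ)) : Set (Fin n → ℝ) :=
  {v | v ∈ N ∧ ∃ i j, i ≠ j ∧ v = rootVec n i j}

theorem span_rootsIn_le (N : Submodule ℝ (Fin n → ℝ)) : span ℝ (rootsIn N) ≤ N :=
  span_le.2 fun _ hv => hv.1

theorem rootVec_mem_span_rootsIn {N : Submodule ℝ (Fin n → ℝ)} {i j : Fin n}
    (h : RootRel N i j) : rootVec n i j ∈ span ℝ (rootsIn N) := by
  by_cases hij : i = j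
  · simp [hij, rootVec_self]
  · exact subset_span ⟨h, i, j, hij, rfl⟩

theorem isRootSubspace_iff_le_span (N : Submodule ℝ (Fin n → ℝ)) :
    IsRootSubspace N ↔ N ≤ span ℝ (rootsIn N) := by
  constructor
  · rintro ⟨A, hA, rfl⟩
    refine span_le.2 fun v hv => ?_
    obtain ⟨i, j, -, rfl⟩ := hA v hv
    exact rootVec_mem_span_rootsIn (subset_span hv)
  · intro h
    exact ⟨rootsIn N, fun v hv => hv.2, le_antisymm h (span_rootsIn_le N)⟩

theorem sum_rootClass_eq_zero {N : Submodule ℝ (Fin n → ℝ)} {x : Fin n → ℝ}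
    (hx : x ∈ span ℝ (rootsIn N)) (i : Fin n) : ∑ j ∈ rootClass N i, x j = 0 := by
  induction hx using span_induction with
  | mem v hv =>
    obtain ⟨hvN, j, k, -, rfl⟩ := hv
    have hjk : j ∈ rootClass N i ↔ k ∈ rootClass N i := by
      simp only [mem_rootClass]
      exact ⟨fun h => (rootRel_equivalence N).trans h hvN,
        fun h => (rootRel_equivalence N).trans h ((rootRel_equivalence N).symm hvN)⟩
    simp only [sum_rootVec_apply, hjk, sub_self]
  | zero => simp
  | add x y _ _ hx hy => simp [sum_add_distrib, hx, hy]
  | smul r x _ hx => simp [← mul_sum, hx]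

end Roots

namespace SimpleGraph.Walk

variable {V : Type*} {G : SimpleGraph V} {v w : V} {c : G.Walk v v}

theorem not_isChordless_iff {u : V} {p : G.Walk u w} :
    ¬ p.IsChordless ↔ ∃ x ∈ p.support, ∃ y ∈ p.support, G.Adj x y ∧ s(x, y) ∉ p.edges := by
  simp [isChordless_iff_forall_mem_edges]

theorem edges_eq_cons_edges_tail {u : V} {p : G.Walk u w} (hp : ¬ p.Nil) :
    p.edges = s(u, p.snd) :: p.tail.edges := by
  conv_lhs => rw [← p.cons_tail_eq hp]
  rfl

theorem IsCycle.eq_snd_or_eq_penultimate_of_mem_edges (hc : c.IsCycle) (h : s(v, w) ∈ c.edges) :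
    w = c.snd ∨ w = c.penultimate := by
  rw [edges_eq_cons_edges_tail hc.not_nil, List.mem_cons, Sym2.congr_right] at h
  refine h.imp id fun h => ?_
  rw [hc.isPath_tail.eq_penultimate_of_mem_edges h, penultimate, penultimate, getVert_tail,
    length_tail, Nat.sub_add_cancel]
  have := hc.three_le_length
  omega

theorem IsCycle.mk_start_getVert_notMem_edges (hc : c.IsCycle) {i : ℕ} (h2 : 2 ≤ i)
    (hi : i + 2 ≤ c.length) : s(v, c.getVert i) ∉ c.edges := by
  intro h
  rcases hc.eq_snd_or_eq_penultimate_of_mem_edges h with h | h <;>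
  · have := hc.getVert_injOn (by simp; omega) (by simp; omega) h
    omega

theorem IsCycle.mk_snd_penultimate_notMem_edges (hc : c.IsCycle) (h4 : 4 ≤ c.length) :
    s(c.snd, c.penultimate) ∉ c.edges := by
  have hpen : c.penultimate ≠ v := by
    rw [penultimate, Ne, hc.getVert_endpoint_iff (by omega)]; omega
  rw [edges_eq_cons_edges_tail hc.not_nil, List.mem_cons, not_or, Sym2.eq_swap, Sym2.congr_left]
  refine ⟨hpen, fun h => ?_⟩
  have h2 := hc.isPath_tail.eq_snd_of_mem_edges (Sym2.eq_swap ▸ h)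
  rw [snd, getVert_tail, penultimate] at h2
  have := hc.getVert_injOn (by simp; omega) (by simp; omega) h2
  omega

def ofSeq (f : ℕ → V) (h : ∀ i, G.Adj (f i) (f (i + 1))) : (m : ℕ) → G.Walk (f 0) (f m)
  | 0 => nil
  | m + 1 => (ofSeq f h m).concat (h m)

variable (f : ℕ → V) (h : ∀ i, G.Adj (f i) (f (i + 1))) (m : ℕ)

@[simp]
theorem length_ofSeq : (ofSeq f h m).length = m := by
  induction m with
  | zero => rfl
  | succ m ih => simp [ofSeq, ih]

@[simp]
theorem support_ofSeq : (ofSeq f h m).support = (List.range (m + 1)).map f := by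
  induction m with
  | zero => rfl
  | succ m ih => simp [ofSeq, ih, List.range_succ (n := m + 1)]

@[simp]
theorem edges_ofSeq : (ofSeq f h m).edges = (List.range m).map fun i => s(f i, f (i + 1)) := by
  induction m with
  | zero => rfl
  | succ m ih => simp [ofSeq, ih, List.range_succ]

variable {f h} {ℓ : ℕ} (hper : Function.Periodic f ℓ)
include hper

theorem isCycle_ofSeq_copy (hinj : Set.InjOn f (Set.Iio ℓ)) (h3 : 3 ≤ ℓ) :
    ((ofSeq f h ℓ).copy rfl hper.eq).IsCycle := by
  have hmod : ∀ i, f (i % ℓ) = f i := hper.map_mod_nat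
  have hmodlt : ∀ i, i % ℓ < ℓ := fun i => Nat.mod_lt i (by omega)
  rw [isCycle_iff_isPath_tail_and_le_length, isPath_def, support_tail_of_not_nil _ fun hn => by
    rw [← length_eq_zero_iff, length_copy, length_ofSeq] at hn; omega]
  simp only [support_copy, support_ofSeq, List.range_succ_eq_map, List.map_cons, List.map_map,
    List.tail_cons, length_copy, length_ofSeq]
  refine ⟨List.Nodup.map_on (fun i hi j hj he => ?_) List.nodup_range, h3⟩
  simp only [List.mem_range, Function.comp_apply, ← hmod (_ + 1)] at hi hj he
  exact Nat.ModEq.eq_of_lt_of_lt (Nat.ModEq.add_right_cancel' 1 (hinj (hmodlt _) (hmodlt _) he))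
    hi hj

theorem isChordless_ofSeq_copy (hpos : 0 < ℓ)
    (hchord : ∀ i j, i < j → j < ℓ → G.Adj (f i) (f j) → j = i + 1 ∨ i = 0 ∧ j = ℓ - 1) :
    ((ofSeq f h ℓ).copy rfl hper.eq).IsChordless := by
  have hmod : ∀ i, f (i % ℓ) = f i := hper.map_mod_nat
  have hmodlt : ∀ i, i % ℓ < ℓ := fun i => Nat.mod_lt i hpos
  have hedge : ∀ i j, i < j → j < ℓ → G.Adj (f i) (f j) →
      s(f i, f j) ∈ (List.range ℓ).map fun i => s(f i, f (i + 1)) := by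
    intro i j hij hj hadj
    rcases hchord i j hij hj hadj with rfl | ⟨rfl, rfl⟩
    · exact List.mem_map.2 ⟨i, List.mem_range.2 (by omega), rfl⟩
    · refine List.mem_map.2 ⟨ℓ - 1, List.mem_range.2 (by omega), ?_⟩
      rw [Nat.sub_add_cancel hpos, hper.eq, Sym2.eq_swap]
  rw [isChordless_iff_forall_mem_edges]
  simp only [support_copy, support_ofSeq, edges_copy, edges_ofSeq]
  intro x y hx hy hxy
  obtain ⟨i, -, rfl⟩ := List.mem_map.1 hx
  obtain ⟨j, -, rfl⟩ := List.mem_map.1 hy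
  rw [← hmod i, ← hmod j] at hxy ⊢
  rcases lt_trichotomy (i % ℓ) (j % ℓ) with hij | hij | hij
  · exact hedge _ _ hij (hmodlt j) hxy
  · exact (hxy.ne (by rw [hij])).elim
  · rw [Sym2.eq_swap]
    exact hedge _ _ hij (hmodlt i) hxy.symm

end SimpleGraph.Walk

namespace SimpleGraph

variable {V : Type*} {a b : V → V → Prop}

theorem sup_fromRel_adj_iff (ha : ∀ {x y}, a x y → a y x) (hb : ∀ {x y}, b x y → b y x) {x y : V} :
    (fromRel a ⊔ fromRel b).Adj x y ↔ x ≠ y ∧ (a x y ∨ b x y) := by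
  simp only [sup_adj, fromRel_adj]
  constructor
  · rintro (⟨hxy, h | h⟩ | ⟨hxy, h | h⟩)
    exacts [⟨hxy, .inl h⟩, ⟨hxy, .inl (ha h)⟩, ⟨hxy, .inr h⟩, ⟨hxy, .inr (hb h)⟩]
  · rintro ⟨hxy, h | h⟩
    exacts [.inl ⟨hxy, .inl h⟩, .inr ⟨hxy, .inl h⟩]

variable (ha : Equivalence a) (hb : Equivalence b) {v : V}
  {c : (fromRel a ⊔ fromRel b).Walk v v}
include ha hb

theorem Walk.IsChordless.eq_of_rel_of_rel (hc : c.IsCycle) (h4 : 4 ≤ c.length)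
    (hch : c.IsChordless) {x : V} (hx : x ∈ c.support) (hax : a v x) (hbx : b v x) : x = v := by
  have hadj {x y : V} := sup_fromRel_adj_iff (a := a) (b := b) (x := x) (y := y) ha.symm hb.symm
  by_contra hxv
  have far : ∀ i, 2 ≤ i → i + 2 ≤ c.length → ¬ (a x (c.getVert i) ∨ b x (c.getVert i)) := by
    intro i h2 hi h
    have hv : v ≠ c.getVert i := by
      rw [Ne, eq_comm, hc.getVert_endpoint_iff (by omega)]; omega
    exact hc.mk_start_getVert_notMem_edges h2 hi <| hch.mem_edges c.start_mem_support
      (c.getVert_mem_support i) (hadj.2 ⟨hv, h.imp (ha.trans hax) (hb.trans hbx)⟩)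
  rcases hc.eq_snd_or_eq_penultimate_of_mem_edges
    (hch.mem_edges c.start_mem_support hx (hadj.2 ⟨Ne.symm hxv, .inl hax⟩)) with rfl | rfl
  · exact far 2 le_rfl h4 (hadj.1 (c.adj_getVert_succ (i := 1) (by omega))).2
  · have h := (hadj.1 (c.adj_getVert_succ (i := c.length - 2) (by omega))).2
    rw [show c.length - 2 + 1 = c.length - 1 by omega] at h
    exact far (c.length - 2) (by omega) (by omega) (h.imp ha.symm hb.symm)

theorem Walk.IsChordless.rel_snd_iff_not_rel_penultimate (hc : c.IsCycle) (h4 : 4 ≤ c.length)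
    (hch : c.IsChordless) : a v c.snd ↔ ¬ a c.penultimate v := by
  have hadj {x y : V} := sup_fromRel_adj_iff (a := a) (b := b) (x := x) (y := y) ha.symm hb.symm
  have hchord : ¬ (a c.snd c.penultimate ∨ b c.snd c.penultimate) := fun h =>
    hc.mk_snd_penultimate_notMem_edges h4 <| hch.mem_edges (c.getVert_mem_support 1)
      (c.getVert_mem_support _) (hadj.2 ⟨hc.snd_ne_penultimate, h⟩)
  have hsnd := (hadj.1 (c.adj_snd hc.not_nil)).2
  have hpen := (hadj.1 (c.adj_penultimate hc.not_nil)).2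
  constructor
  · exact fun h₁ h₂ => hchord (.inl (ha.trans (ha.symm h₁) (ha.symm h₂)))
  · intro h₁
    by_contra h₂
    exact hchord (.inr (hb.trans (hb.symm (hsnd.resolve_left h₂)) (hb.symm (hpen.resolve_left h₁))))

end SimpleGraph

section Alternating

variable {V : Type*} {a b : V → V → Prop}

def AltStep (a b : V → V → Prop) (i : ℕ) (x y : V) : Prop :=
  if Even i then a x y ∧ ¬ b x y else b x y ∧ ¬ a x y

def IsAltWalk (a b : V → V → Prop) (f : ℕ → V) : Prop :=
  ∀ i, AltStep a b i (f i) (f (i + 1))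

/-- A closed alternating walk of length `ℓ`, traversed periodically. -/
structure IsAltLoop (a b : V → V → Prop) (ℓ : ℕ) (f : ℕ → V) : Prop where
  pos : 0 < ℓ
  periodic : Function.Periodic f ℓ
  isAltWalk : IsAltWalk a b f

theorem altStep_succ {i : ℕ} {x y : V} : AltStep a b (i + 1) x y ↔ AltStep b a i x y := by
  simp only [AltStep, Nat.even_add_one, ite_not]

theorem altStep_congr {i j : ℕ} (h : Even i ↔ Even j) {x y : V} :
    AltStep a b i x y ↔ AltStep a b j x y := by
  simp only [AltStep, h]

theorem altStep_even {i : ℕ} (hi : Even i) {x y : V} : AltStep a b i x y ↔ a x y ∧ ¬ b x y := by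
  simp [AltStep, hi]

theorem altStep_odd {i : ℕ} (hi : Odd i) {x y : V} : AltStep a b i x y ↔ b x y ∧ ¬ a x y := by
  simp [AltStep, Nat.not_even_iff_odd.2 hi]

theorem AltStep.rel {i : ℕ} {x y : V} (h : AltStep a b i x y) : a x y ∨ b x y := by
  unfold AltStep at h
  split_ifs at h
  exacts [.inl h.1, .inr h.1]

theorem AltStep.ne (ha : ∀ x, a x x) (hb : ∀ x, b x x) {i : ℕ} {x y : V}
    (h : AltStep a b i x y) : x ≠ y := by
  rintro rfl
  unfold AltStep at h
  split_ifs at h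
  exacts [h.2 (hb x), h.2 (ha x)]

theorem IsAltWalk.shift_one {f : ℕ → V} (hf : IsAltWalk a b f) :
    IsAltWalk b a (fun i => f (i + 1)) :=
  fun i => altStep_succ.1 (hf (i + 1))

variable {ℓ : ℕ} {f : ℕ → V}

theorem IsAltLoop.shift_one (hf : IsAltLoop a b ℓ f) : IsAltLoop b a ℓ (fun i => f (i + 1)) :=
  ⟨hf.pos, hf.periodic.add_const 1, hf.isAltWalk.shift_one⟩

theorem IsAltLoop.shift (hf : IsAltLoop a b ℓ f) (k : ℕ) :
    IsAltLoop a b ℓ (fun i => f (i + k)) ∨ IsAltLoop b a ℓ (fun i => f (i + k)) := by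
  induction k generalizing a b f with
  | zero => exact .inl hf
  | succ k ih =>
    simp_rw [← add_assoc]
    exact (ih hf.shift_one).symm

theorem IsAltLoop.four_le (ha : ∀ {x y}, a x y → a y x) (hf : IsAltLoop a b ℓ f) : 4 ≤ ℓ := by
  have h₀ := (altStep_even Even.zero).1 (hf.isAltWalk 0)
  have hℓ := hf.isAltWalk ℓ
  rw [hf.periodic.eq, add_comm, hf.periodic 1] at hℓ
  have heven : Even ℓ := by
    by_contra hodd
    exact ((altStep_odd (Nat.not_even_iff_odd.1 hodd)).1 hℓ).2 h₀.1
  have htwo : ℓ ≠ 2 := by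
    rintro rfl
    have h₁ := (altStep_odd odd_one).1 (hf.isAltWalk 1)
    rw [hf.periodic.eq] at h₁
    exact h₁.2 (ha h₀.1)
  obtain ⟨m, rfl⟩ := heven
  have := hf.pos
  omega

theorem isAltLoop_mod {m : ℕ} (hm : Even m) (hpos : 0 < m)
    (hstep : ∀ i, i + 1 < m → AltStep a b i (f i) (f (i + 1)))
    (hclose : AltStep a b (m - 1) (f (m - 1)) (f 0)) :
    IsAltLoop a b m (fun i => f (i % m)) := by
  refine ⟨hpos, fun i => by simp, fun i => ?_⟩
  have hm2 : 2 ≤ m := by obtain ⟨k, rfl⟩ := hm; omega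
  have hlt := Nat.mod_lt i hpos
  have hsucc : (i + 1) % m = (i % m + 1) % m := by
    rw [Nat.add_mod, Nat.mod_eq_of_lt (by omega : 1 < m)]
  rw [altStep_congr (i := i) (j := i % m) (by
    rw [Nat.even_iff, Nat.even_iff, Nat.mod_mod_of_dvd _ (even_iff_two_dvd.1 hm)]), hsucc]
  by_cases h : i % m + 1 < m
  · rw [Nat.mod_eq_of_lt h]
    exact hstep _ h
  · rw [show i % m + 1 = m by omega, Nat.mod_self, show i % m = m - 1 by omega]
    exact hclose

/-- Leaving every vertex of `S` alternately by an `a`-only and a `b`-only step, one must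
eventually return to a vertex already visited after an even number of steps. -/
theorem exists_isAltLoop [Finite V] {S : Set V} (hS : S.Nonempty)
    (ha : ∀ x ∈ S, ∃ y ∈ S, a x y ∧ ¬ b x y) (hb : ∀ x ∈ S, ∃ y ∈ S, b x y ∧ ¬ a x y) :
    ∃ ℓ f, IsAltLoop a b ℓ f := by
  choose! α hαS hα using ha
  choose! β hβS hβ using hb
  have hT : Set.MapsTo (β ∘ α) S S := fun x hx => hβS _ (hαS x hx)
  obtain ⟨x₀, hx₀⟩ := hS
  obtain ⟨i, j, hij, heq⟩ := Finite.exists_ne_map_eq_of_infinite fun k => (β ∘ α)^[k] x₀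
  wlog hlt : i < j generalizing i j
  · exact this j i hij.symm heq.symm (by omega)
  set y := (β ∘ α)^[i] x₀
  have hy : (β ∘ α)^[j - i] y = y := by
    rw [← Function.iterate_add_apply, Nat.sub_add_cancel hlt.le]
    exact heq.symm
  set g : ℕ → V := fun k => (β ∘ α)^[k] y
  have hgS : ∀ k, g k ∈ S := fun k => (hT.iterate k) ((hT.iterate i) hx₀)
  set f : ℕ → V := fun k => if Even k then g (k / 2) else α (g (k / 2))
  have hf : IsAltWalk a b f := by
    intro k
    rcases Nat.even_or_odd k with hk | hk
    · rw [altStep_even hk]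
      have : (k + 1) / 2 = k / 2 := by obtain ⟨m, rfl⟩ := hk; omega
      simpa [f, hk, Nat.even_add_one, this] using hα _ (hgS (k / 2))
    · rw [altStep_odd hk]
      have : (k + 1) / 2 = k / 2 + 1 := by obtain ⟨m, rfl⟩ := hk; omega
      simpa [f, Nat.not_even_iff_odd.2 hk, Nat.even_add_one, this, g,
        Function.iterate_succ_apply'] using hβ _ (hαS _ (hgS (k / 2)))
  refine ⟨2 * (j - i), _, isAltLoop_mod (even_two_mul _) (by omega) (fun k _ => hf k) ?_⟩
  have hclose := hf (2 * (j - i) - 1)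
  rwa [Nat.sub_add_cancel (by omega), show f (2 * (j - i)) = f 0 by simp [f, g, hy]] at hclose

/-- A chord either shortens, by transitivity along the adjacent step of the same kind, to a chord
spanning fewer steps, or closes up a shorter alternating loop. -/
theorem IsAltLoop.not_rel_of_minimal (ha : Equivalence a) (hb : Equivalence b)
    (hf : IsAltLoop a b ℓ f) (hmin : ∀ m < ℓ, ∀ g, ¬ IsAltLoop a b m g) {d : ℕ} (hd : 2 ≤ d)
    (hdℓ : d + 2 ≤ ℓ) : ¬ a (f 0) (f d) ∧ ¬ b (f 0) (f d) := by
  induction d using Nat.strong_induction_on generalizing a b f with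
  | _ d ih =>
  have step := hf.isAltWalk
  have h₀ := (altStep_even Even.zero).1 (step 0)
  have hna : ¬ a (f 0) (f d) := by
    intro had
    have h₁ : a (f 1) (f d) := ha.trans (ha.symm h₀.1) had
    by_cases hd2 : d = 2
    · subst hd2
      exact ((altStep_odd odd_one).1 (step 1)).2 h₁
    · refine (ih (d - 1) (by omega) hb ha hf.shift_one
        (fun m hm g hg => hmin m hm _ hg.shift_one) (by omega) (by omega)).2 ?_
      simpa [Nat.sub_add_cancel (by omega : 1 ≤ d)] using h₁
  refine ⟨hna, fun hbd => ?_⟩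
  have hstep := step (d - 1)
  rw [Nat.sub_add_cancel (by omega)] at hstep
  rcases Nat.even_or_odd (d - 1) with hev | hodd
  · have hd : Odd d := by obtain ⟨k, hk⟩ := hev; exact ⟨k, by omega⟩
    refine hmin (d + 1) (by omega) _ (isAltLoop_mod (by simpa [Nat.even_add_one] using hd)
      (by omega) (fun i _ => step i) ?_)
    rw [Nat.add_sub_cancel, altStep_odd hd]
    exact ⟨hb.symm hbd, fun h => hna (ha.symm h)⟩
  · have h₁ : b (f 0) (f (d - 1)) := hb.trans hbd (hb.symm ((altStep_odd hodd).1 hstep).1)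
    by_cases hd2 : d = 2
    · subst hd2
      exact h₀.2 h₁
    · exact (ih (d - 1) (by omega) ha hb hf hmin (by omega) (by omega)).2 h₁

theorem IsAltLoop.eq_add_one_of_rel (ha : Equivalence a) (hb : Equivalence b)
    (hf : IsAltLoop a b ℓ f) (hmin : ∀ m < ℓ, ∀ g, ¬ IsAltLoop a b m g) {i j : ℕ} (hij : i < j)
    (hj : j < ℓ) (h : a (f i) (f j) ∨ b (f i) (f j)) : j = i + 1 ∨ i = 0 ∧ j = ℓ - 1 := by
  by_contra! hfar
  have hd : j - i + i = j := Nat.sub_add_cancel hij.le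
  rcases hf.shift i with hg | hg
  · have := hg.not_rel_of_minimal ha hb hmin (d := j - i) (by omega) (by omega)
    simp only [zero_add, hd] at this
    tauto
  · have := hg.not_rel_of_minimal hb ha (fun m hm g hg => hmin m hm _ hg.shift_one)
      (d := j - i) (by omega) (by omega)
    simp only [zero_add, hd] at this
    tauto

theorem IsAltLoop.injOn_of_minimal (ha : Equivalence a) (hb : Equivalence b)
    (hf : IsAltLoop a b ℓ f) (hmin : ∀ m < ℓ, ∀ g, ¬ IsAltLoop a b m g) :
    Set.InjOn f (Set.Iio ℓ) := by
  intro i hi j hj he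
  wlog hij : i < j generalizing i j
  · rcases (not_lt.1 hij).lt_or_eq with h | h
    exacts [(this hj hi he.symm h).symm, h.symm]
  exfalso
  rcases hf.eq_add_one_of_rel ha hb hmin hij hj (.inl (he ▸ ha.refl _)) with rfl | ⟨rfl, rfl⟩
  · exact (hf.isAltWalk i).ne ha.refl hb.refl he
  · have hlast := (hf.isAltWalk (ℓ - 1)).ne ha.refl hb.refl
    rw [Nat.sub_add_cancel hf.pos, hf.periodic.eq] at hlast
    exact hlast he.symm

theorem IsAltLoop.exists_isCycle_isChordless (ha : Equivalence a) (hb : Equivalence b)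
    (hf : IsAltLoop a b ℓ f) (hmin : ∀ m < ℓ, ∀ g, ¬ IsAltLoop a b m g) :
    ∃ (v : V) (c : (fromRel a ⊔ fromRel b).Walk v v),
      c.IsCycle ∧ 4 ≤ c.length ∧ c.IsChordless := by
  have hadj {x y : V} := sup_fromRel_adj_iff (a := a) (b := b) (x := x) (y := y) ha.symm hb.symm
  have h4 := hf.four_le ha.symm
  have hstep : ∀ i, (fromRel a ⊔ fromRel b).Adj (f i) (f (i + 1)) := fun i =>
    hadj.2 ⟨(hf.isAltWalk i).ne ha.refl hb.refl, (hf.isAltWalk i).rel⟩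
  refine ⟨f 0, (Walk.ofSeq f hstep ℓ).copy rfl hf.periodic.eq,
    Walk.isCycle_ofSeq_copy hf.periodic (hf.injOn_of_minimal ha hb hmin) (by omega),
    by simpa using h4, Walk.isChordless_ofSeq_copy hf.periodic hf.pos fun i j hij hj h => ?_⟩
  exact hf.eq_add_one_of_rel ha hb hmin hij hj (hadj.1 h).2

theorem exists_leaf_of_forall_not_isChordless [Finite V] (ha : Equivalence a)
    (hb : Equivalence b)
    (hch : ∀ (v : V) (c : (fromRel a ⊔ fromRel b).Walk v v),
      c.IsCycle → 4 ≤ c.length → ¬ c.IsChordless)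
    {S : Set V} (hS : S.Nonempty) :
    ∃ x ∈ S, (∀ y ∈ S, a x y → b x y) ∨ (∀ y ∈ S, b x y → a x y) := by
  by_contra! h
  have hex : ∃ ℓ f, IsAltLoop a b ℓ f :=
    exists_isAltLoop hS (fun x hx => (h x hx).1) (fun x hx => (h x hx).2)
  obtain ⟨f, hf⟩ := Nat.find_spec hex
  obtain ⟨v, c, hc, h4, hchl⟩ :=
    hf.exists_isCycle_isChordless ha hb fun m hm g hg => Nat.find_min hex hm ⟨g, hg⟩
  exact hch v c hc h4 hchl

end Alternating

section ChordlessCycle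

variable {n : ℕ} {L M : Submodule ℝ (Fin n → ℝ)}

/-- The non-`L` edges of the closed walk lie in `M`, and all its edges together telescope to `0`. -/
theorem sum_ite_rootVec_mem_inf {k : ℕ} {p : ℕ → Fin n}
    (hstep : ∀ i < k, RootRel L (p i) (p (i + 1)) ∨ RootRel M (p i) (p (i + 1)))
    (hclosed : p k = p 0) :
    ∑ i ∈ range k, (if RootRel L (p i) (p (i + 1)) then rootVec n (p i) (p (i + 1)) else 0)
      ∈ L ⊓ M := by
  refine mem_inf.2 ⟨sum_mem fun i _ => ?_, ?_⟩
  · split_ifs with h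
    exacts [h, zero_mem _]
  have htelescope : ∑ i ∈ range k, rootVec n (p i) (p (i + 1)) = 0 := by
    simpa [rootVec, hclosed] using sum_range_sub' (fun i => (Pi.single (p i) 1 : Fin n → ℝ)) k
  have hsplit : ∑ i ∈ range k,
      (if RootRel L (p i) (p (i + 1)) then rootVec n (p i) (p (i + 1)) else 0) =
      ∑ i ∈ range k, rootVec n (p i) (p (i + 1)) -
        ∑ i ∈ range k,
          (if RootRel L (p i) (p (i + 1)) then 0 else rootVec n (p i) (p (i + 1))) := by
    rw [← sum_sub_distrib]
    exact sum_congr rfl fun i _ => by split_ifs <;> simp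
  rw [hsplit, htelescope, zero_sub]
  refine M.neg_mem (sum_mem fun i hi => ?_)
  split_ifs with h
  exacts [zero_mem _, (hstep i (mem_range.1 hi)).resolve_left h]

theorem sum_sum_ite_rootVec_apply {k : ℕ} (hk : 2 ≤ k) {p : ℕ → Fin n} {C : Finset (Fin n)}
    (hC : ∀ i ≤ k, p i ∈ C ↔ i = 0 ∨ i = k) (A : ℕ → Prop) :
    ∑ j ∈ C, (∑ i ∈ range k, if A i then rootVec n (p i) (p (i + 1)) else 0) j =
      (if A 0 then 1 else 0) - (if A (k - 1) then 1 else 0) := calc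
  _ = ∑ i ∈ range k,
        if A i then (if p i ∈ C then (1 : ℝ) else 0) - (if p (i + 1) ∈ C then 1 else 0) else 0 := by
    simp only [Finset.sum_apply]
    rw [sum_comm]
    exact sum_congr rfl fun i _ => by by_cases h : A i <;> simp [h, sum_rootVec_apply]
  _ = ∑ i ∈ range k, ((if i = 0 then (if A i then (1 : ℝ) else 0) else 0) -
        (if i = k - 1 then (if A i then 1 else 0) else 0)) := by
    refine sum_congr rfl fun i hi => ?_
    have hi := mem_range.1 hi
    have h₀ : p i ∈ C ↔ i = 0 := by rw [hC i hi.le]; omega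
    have h₁ : p (i + 1) ∈ C ↔ i = k - 1 := by rw [hC (i + 1) hi]; omega
    simp only [h₀, h₁]
    split_ifs <;> simp
  _ = _ := by
    rw [sum_sub_distrib, sum_ite_eq', sum_ite_eq', if_pos (mem_range.2 (by omega)),
      if_pos (mem_range.2 (by omega))]

theorem not_isRootSubspace_inf_of_isChordless {v : Fin n}
    {c : (fromRel (RootRel L) ⊔ fromRel (RootRel M)).Walk v v} (hc : c.IsCycle)
    (h4 : 4 ≤ c.length) (hch : c.IsChordless) : ¬ IsRootSubspace (L ⊓ M) := by
  intro hLM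
  have hL := rootRel_equivalence L
  have hM := rootRel_equivalence M
  have hu := sum_ite_rootVec_mem_inf (k := c.length) (p := c.getVert)
    (fun i hi => ((sup_fromRel_adj_iff hL.symm hM.symm).1 (c.adj_getVert_succ hi)).2)
    (by simp)
  have hclass : ∀ i ≤ c.length, c.getVert i ∈ rootClass (L ⊓ M) v ↔ i = 0 ∨ i = c.length := by
    intro i hi
    rw [mem_rootClass, ← hc.getVert_endpoint_iff hi]
    exact ⟨fun h => hch.eq_of_rel_of_rel hL hM hc h4 (c.getVert_mem_support i) h.1 h.2,
      fun h => by rw [h]; exact (rootRel_equivalence _).refl v⟩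
  have key := (sum_sum_ite_rootVec_apply (by omega) hclass _).symm.trans
    (sum_rootClass_eq_zero ((isRootSubspace_iff_le_span _).1 hLM hu) v)
  simp only [Walk.getVert_zero, zero_add, Nat.sub_add_cancel (by omega : 1 ≤ c.length),
    Walk.getVert_length] at key
  have hend := hch.rel_snd_iff_not_rel_penultimate hL hM hc h4
  split_ifs at key <;> norm_num at key <;> tauto

end ChordlessCycle

section Chordal

variable {n : ℕ} {L M : Submodule ℝ (Fin n → ℝ)}

theorem restrict_rootClass_mem_span (hL : IsRootSubspace L) {x : Fin n → ℝ} (hx : x ∈ L)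
    {i : Fin n} (hleaf : ∀ j, x j ≠ 0 → RootRel L i j → RootRel M i j) :
    (fun j => if j ∈ rootClass L i then x j else 0) ∈ span ℝ (rootsIn (L ⊓ M)) := by
  have hsum := sum_rootClass_eq_zero ((isRootSubspace_iff_le_span L).1 hL hx) i
  have hcomb : (fun j => if j ∈ rootClass L i then x j else 0) =
      ∑ j ∈ rootClass L i, x j • rootVec n j i := by
    ext l
    simp [Finset.sum_apply, rootVec, Pi.single_apply, mul_sub, sum_sub_distrib, hsum]
  rw [hcomb]
  refine sum_mem fun j hj => ?_
  by_cases hxj : x j = 0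
  · simp [hxj]
  · have hj := mem_rootClass.1 hj
    exact smul_mem _ _ (rootVec_mem_span_rootsIn
      ⟨(rootRel_equivalence L).symm hj, (rootRel_equivalence M).symm (hleaf j hxj hj)⟩)

theorem isRootSubspace_inf_of_forall_not_isChordless (hL : IsRootSubspace L)
    (hM : IsRootSubspace M)
    (hch : ∀ (v : Fin n) (c : (fromRel (RootRel L) ⊔ fromRel (RootRel M)).Walk v v),
      c.IsCycle → 4 ≤ c.length → ¬ c.IsChordless) :
    IsRootSubspace (L ⊓ M) := by
  rw [isRootSubspace_iff_le_span]
  intro x hx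
  induction hN : #{j | x j ≠ 0} using Nat.strong_induction_on generalizing x with
  | _ N ih =>
  by_cases hx0 : x = 0
  · simp [hx0]
  obtain ⟨i, hi, hleaf⟩ := exists_leaf_of_forall_not_isChordless (rootRel_equivalence L)
    (rootRel_equivalence M) hch (S := {j | x j ≠ 0}) (Function.ne_iff.1 hx0)
  obtain ⟨C, hiC, hy⟩ : ∃ C : Finset (Fin n), i ∈ C ∧
      (fun j => if j ∈ C then x j else 0) ∈ span ℝ (rootsIn (L ⊓ M)) := by
    rcases hleaf with h | h
    · exact ⟨rootClass L i, mem_rootClass.2 ((rootRel_equivalence L).refl i),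
        restrict_rootClass_mem_span hL hx.1 h⟩
    · exact ⟨rootClass M i, mem_rootClass.2 ((rootRel_equivalence M).refl i),
        inf_comm M L ▸ restrict_rootClass_mem_span hM hx.2 h⟩
  set y : Fin n → ℝ := fun j => if j ∈ C then x j else 0
  have hlt : #{j | (x - y) j ≠ 0} < N := by
    rw [← hN]
    refine card_lt_card ((ssubset_iff_of_subset fun j => ?_).2 ⟨i, ?_, ?_⟩)
    · simp only [mem_filter, mem_univ, true_and, Pi.sub_apply, y]
      split_ifs <;> simp
    · simpa using hi
    · simp [y, hiC]
  simpa using add_mem (ih _ hlt (sub_mem hx (span_rootsIn_le _ hy)) rfl) hy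

end Chordal

/-- `L ∩ M` is a root subspace iff every cycle of length at least four in the
graph union `Γ_L ∪ Γ_M` has a chord (an edge of the graph between two vertices of
the cycle which is not an edge of the cycle). -/
theorem stmt2 {n : ℕ} (L M : Submodule ℝ (Fin n → ℝ))
    (hL : IsRootSubspace L) (hM : IsRootSubspace M)
    (G : SimpleGraph (Fin n))
    (hG : G = SimpleGraph.fromRel (fun a b => rootVec n a b ∈ L) ⊔
        SimpleGraph.fromRel (fun a b => rootVec n a b ∈ M)) :
    IsRootSubspace (L ⊓ M) ↔
      ∀ (v : Fin n) (c : G.Walk v v), c.IsCycle → 4 ≤ c.length →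
        ∃ x ∈ c.support, ∃ y ∈ c.support, G.Adj x y ∧ s(x, y) ∉ c.edges := by
  subst hG
  simp_rw [← Walk.not_isChordless_iff]
  exact ⟨fun h v c hc h4 hch => not_isRootSubspace_inf_of_isChordless hc h4 hch h,
    isRootSubspace_inf_of_forall_not_isChordless hL hM⟩
end

section
/- Fix an ordered set partition S = (B_1,...,B_ℓ) of [n]. The polytope Δ_S in H_n defined by the conditions x_i = x_j for i,j in the same block B_k; x_i ≥ x_j for i ∈ B_k, j ∈ B_{k+1} (1 ≤ k ≤ ℓ-1); and x_i ≥ x_j − 1 for i ∈ B_ℓ, j ∈ B_1, is a simplex of dimension ℓ − 1. -/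
/-!
Send each coordinate to its block by `κ`. A point of `Δ_S` is constant on blocks, hence determined
by its block values `y₀ ≥ y₁ ≥ ⋯ ≥ y_ℓ ≥ y₀ - 1` up to the additive constant fixed by `∑ x = 0`.
Writing `y_k - y_ℓ = ∑_{t > k} w_t` with `w₀ = 1 - (y₀ - y_ℓ)` the slack of the wrap-around
inequality, these conditions say exactly that `w` lies in the standard simplex. So `Δ_S` is the
image of the standard simplex under the linear map `w ↦ (∑_{t > κ i} w_t)_i` followed by subtracting
the mean, and this map is injective on `{∑ w = 0}` because `κ` is surjective.
-/

open Finset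

section SubMean

variable {ι 𝕜 : Type*} [Fintype ι] [Field 𝕜]

def subMean : (ι → 𝕜) →ₗ[𝕜] (ι → 𝕜) where
  toFun x i := x i - (∑ j, x j) / Fintype.card ι
  map_add' x y := by ext i; simp only [Pi.add_apply, sum_add_distrib]; ring
  map_smul' c x := by
    ext i; simp only [Pi.smul_apply, smul_eq_mul, ← mul_sum, RingHom.id_apply]; ring

lemma subMean_apply (x : ι → 𝕜) (i : ι) :
    subMean x i = x i - (∑ j, x j) / Fintype.card ι := rfl

lemma subMean_apply_sub_subMean_apply (x : ι → 𝕜) (i j : ι) :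
    subMean x i - subMean x j = x i - x j := by
  simp only [subMean_apply]; ring

lemma subMean_of_sum_eq_zero {x : ι → 𝕜} (hx : ∑ i, x i = 0) : subMean x = x := by
  ext i; simp [subMean_apply, hx]

variable [CharZero 𝕜]

lemma sum_subMean (x : ι → 𝕜) : ∑ i, subMean x i = 0 := by
  cases isEmpty_or_nonempty ι
  · simp
  have : (Fintype.card ι : 𝕜) ≠ 0 := Nat.cast_ne_zero.2 Fintype.card_ne_zero
  simp only [subMean_apply, sum_sub_distrib, sum_const, card_univ, nsmul_eq_mul]
  field_simp
  ring

lemma subMean_sub_const (x : ι → 𝕜) (c : 𝕜) :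
    subMean (x - Function.const ι c) = subMean x := by
  ext i
  have : Nonempty ι := ⟨i⟩
  have : (Fintype.card ι : 𝕜) ≠ 0 := Nat.cast_ne_zero.2 Fintype.card_ne_zero
  simp only [subMean_apply, Pi.sub_apply, Function.const_apply, sum_sub_distrib, sum_const,
    card_univ, nsmul_eq_mul]
  field_simp
  ring

end SubMean

section TailSum

variable {R : Type*} [CommRing R] {m : ℕ}

def tailSum : (Fin m → R) →ₗ[R] (Fin m → R) where
  toFun w k := ∑ t ∈ Ioi k, w t
  map_add' v w := by ext k; simp [sum_add_distrib]
  map_smul' c w := by ext k; simp [mul_sum]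

lemma tailSum_apply (w : Fin m → R) (k : Fin m) : tailSum w k = ∑ t ∈ Ioi k, w t := rfl

lemma tailSum_last (w : Fin (m + 1) → R) : tailSum w (Fin.last m) = 0 := by
  rw [tailSum_apply, Ioi_eq_empty.2 fun _ _ => Fin.le_last _, sum_empty]

lemma tailSum_castSucc (w : Fin (m + 1) → R) (s : Fin m) :
    tailSum w s.castSucc = w s.succ + tailSum w s.succ := by
  have : Ioi s.castSucc = insert s.succ (Ioi s.succ) := by
    ext t
    simp only [mem_Ioi, mem_insert, Fin.lt_def, Fin.ext_iff, Fin.val_castSucc, Fin.val_succ]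
    omega
  rw [tailSum_apply, this, sum_insert (by simp), tailSum_apply]

lemma tailSum_zero (w : Fin (m + 1) → R) : tailSum w 0 = ∑ t, w t - w 0 := by
  rw [Fin.sum_univ_succ, tailSum_apply]
  simp

lemma tailSum_eq_sub_last {w y : Fin (m + 1) → R}
    (h : ∀ s : Fin m, w s.succ = y s.castSucc - y s.succ)
    (k : Fin (m + 1)) : tailSum w k = y k - y (Fin.last m) := by
  induction k using Fin.reverseInduction with
  | last => simp [tailSum_last]
  | cast s ih => rw [tailSum_castSucc, ih, h]; ring

end TailSum

lemma LinearMap.affineIndependent_single {ι k V : Type*} [Fintype ι] [DecidableEq ι] [Ring k]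
    [AddCommGroup V] [Module k V] (f : (ι → k) →ₗ[k] V)
    (hf : ∀ w : ι → k, ∑ i, w i = 0 → f w = 0 → w = 0) :
    AffineIndependent k fun i => f (Pi.single i 1) := by
  rw [affineIndependent_iff_of_fintype]
  intro w hw hfw
  rw [univ.weightedVSub_eq_linear_combination hw] at hfw
  have hsum : ∑ i, w i • Pi.single i (1 : k) = w := by
    ext j; simp [Pi.single_apply]
  simp only [← map_smul, ← map_sum, hsum] at hfw
  exact congrFun (hf w hw hfw)

section Alcove

variable {n ℓ : ℕ}

def blockAlcove (B : Fin (ℓ + 1) → Finset (Fin n)) : Set (Fin n → ℝ) :=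
  {x | (∑ i, x i) = 0 ∧
    (∀ k : Fin (ℓ + 1), ∀ i ∈ B k, ∀ j ∈ B k, x i = x j) ∧
    (∀ k : Fin ℓ, ∀ i ∈ B k.castSucc, ∀ j ∈ B k.succ, x j ≤ x i) ∧
    (∀ i ∈ B (Fin.last ℓ), ∀ j ∈ B 0, x j - 1 ≤ x i)}

noncomputable def alcoveParam (κ : Fin n → Fin (ℓ + 1)) : (Fin (ℓ + 1) → ℝ) →ₗ[ℝ] (Fin n → ℝ) :=
  subMean ∘ₗ LinearMap.funLeft ℝ ℝ κ ∘ₗ tailSum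

lemma alcoveParam_apply_sub_alcoveParam_apply (κ : Fin n → Fin (ℓ + 1)) (w : Fin (ℓ + 1) → ℝ)
    (i j : Fin n) : alcoveParam κ w i - alcoveParam κ w j = tailSum w (κ i) - tailSum w (κ j) :=
  subMean_apply_sub_subMean_apply _ i j

variable {B : Fin (ℓ + 1) → Finset (Fin n)} {κ : Fin n → Fin (ℓ + 1)}

lemma exists_blockIndex (hdisj : ∀ k k' : Fin (ℓ + 1), k ≠ k' → Disjoint (B k) (B k'))
    (hne : ∀ k, (B k).Nonempty) (hcover : ∀ i : Fin n, ∃ k, i ∈ B k) :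
    ∃ κ : Fin n → Fin (ℓ + 1), Function.Surjective κ ∧ ∀ i k, i ∈ B k ↔ κ i = k := by
  choose κ hκ using hcover
  have hB : ∀ i k, i ∈ B k ↔ κ i = k := fun i k =>
    ⟨fun hi => by_contra fun h => disjoint_left.1 (hdisj _ _ h) (hκ i) hi, fun h => h ▸ hκ i⟩
  refine ⟨κ, fun k => ?_, hB⟩
  obtain ⟨i, hi⟩ := hne k
  exact ⟨i, (hB i k).1 hi⟩

lemma alcoveParam_mem_blockAlcove (hB : ∀ i k, i ∈ B k ↔ κ i = k) {w : Fin (ℓ + 1) → ℝ}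
    (hw : w ∈ stdSimplex ℝ (Fin (ℓ + 1))) : alcoveParam κ w ∈ blockAlcove B := by
  have hdiff := alcoveParam_apply_sub_alcoveParam_apply κ w
  refine ⟨sum_subMean _, fun k i hi j hj => ?_, fun s i hi j hj => ?_, fun i hi j hj => ?_⟩
  · rw [← sub_eq_zero, hdiff, (hB i k).1 hi, (hB j k).1 hj, sub_self]
  · rw [← sub_nonneg, hdiff, (hB i _).1 hi, (hB j _).1 hj, tailSum_castSucc, add_sub_cancel_right]
    exact hw.1 _
  · have := hdiff j i
    rw [(hB i _).1 hi, (hB j _).1 hj, tailSum_last, tailSum_zero, hw.2] at this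
    linarith [hw.1 0]

lemma blockAlcove_subset_image (hB : ∀ i k, i ∈ B k ↔ κ i = k) (hκ : Function.Surjective κ) :
    blockAlcove B ⊆ alcoveParam κ '' stdSimplex ℝ (Fin (ℓ + 1)) := by
  rintro x ⟨hsum, hblock, hchain, hlast⟩
  choose r hr using hκ
  have hmem : ∀ k, r k ∈ B k := fun k => (hB _ k).2 (hr k)
  let w : Fin (ℓ + 1) → ℝ :=
    Fin.cons (1 - (x (r 0) - x (r (Fin.last ℓ)))) fun s => x (r s.castSucc) - x (r s.succ)
  have htail : ∀ k, tailSum w k = x (r k) - x (r (Fin.last ℓ)) :=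
    tailSum_eq_sub_last fun s => by simp [w]
  refine ⟨w, ⟨fun t => ?_, ?_⟩, ?_⟩
  · cases t using Fin.cases with
    | zero =>
      have := hlast _ (hmem _) _ (hmem _)
      simp only [w, Fin.cons_zero]
      linarith
    | succ s => simpa [w] using hchain s _ (hmem _) _ (hmem _)
  · have := tailSum_zero w
    rw [htail] at this
    simp only [w, Fin.cons_zero] at this ⊢
    linarith
  · have hx : (fun i => tailSum w (κ i)) = x - Function.const _ (x (r (Fin.last ℓ))) := by
      ext i
      rw [htail, ← hblock (κ i) i ((hB i _).2 rfl) _ (hmem _)]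
      rfl
    change subMean (fun i => tailSum w (κ i)) = x
    rw [hx, subMean_sub_const, subMean_of_sum_eq_zero hsum]

lemma blockAlcove_eq_image (hB : ∀ i k, i ∈ B k ↔ κ i = k) (hκ : Function.Surjective κ) :
    blockAlcove B = alcoveParam κ '' stdSimplex ℝ (Fin (ℓ + 1)) :=
  (blockAlcove_subset_image hB hκ).antisymm <| by
    rintro _ ⟨w, hw, rfl⟩
    exact alcoveParam_mem_blockAlcove hB hw

lemma affineIndependent_alcoveParam_single (hκ : Function.Surjective κ) :
    AffineIndependent ℝ fun t => alcoveParam κ (Pi.single t 1) := by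
  refine (alcoveParam κ).affineIndependent_single fun w hw hzero => ?_
  have htail : ∀ k, tailSum w k = 0 := fun k => by
    obtain ⟨i, rfl⟩ := hκ k
    obtain ⟨j, hj⟩ := hκ (Fin.last ℓ)
    have := alcoveParam_apply_sub_alcoveParam_apply κ w i j
    simp only [hzero, Pi.zero_apply, sub_zero, hj, tailSum_last] at this
    exact this.symm
  ext t
  induction t using Fin.cases with
  | zero => have := tailSum_zero w; rw [htail, hw] at this; simpa using this
  | succ s => have := tailSum_castSucc w s; rw [htail, htail] at this; simpa using this.symm

end Alcove

theorem stmt7_general {n ℓ : ℕ}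
    (B : Fin (ℓ + 1) → Finset (Fin n))
    (hdisj : ∀ k k' : Fin (ℓ + 1), k ≠ k' → Disjoint (B k) (B k'))
    (hne : ∀ k, (B k).Nonempty)
    (hcover : ∀ i : Fin n, ∃ k, i ∈ B k) :
    ∃ V : Fin (ℓ + 1) → (Fin n → ℝ), AffineIndependent ℝ V ∧
      {x : Fin n → ℝ | (∑ i, x i) = 0 ∧
          (∀ k : Fin (ℓ + 1), ∀ i ∈ B k, ∀ j ∈ B k, x i = x j) ∧
          (∀ k : Fin ℓ, ∀ i ∈ B k.castSucc, ∀ j ∈ B k.succ, x j ≤ x i) ∧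
          (∀ i ∈ B (Fin.last ℓ), ∀ j ∈ B 0, x j - 1 ≤ x i)} =
        convexHull ℝ (Set.range V) := by
  obtain ⟨κ, hκ, hB⟩ := exists_blockIndex hdisj hne hcover
  refine ⟨fun t => alcoveParam κ (Pi.single t 1), affineIndependent_alcoveParam_single hκ, ?_⟩
  change blockAlcove B = _
  rw [blockAlcove_eq_image hB hκ, ← convexHull_rangle_single_eq_stdSimplex,
    LinearMap.image_convexHull, ← Set.range_comp]
  rfl

/-- For an ordered set partition `(B 0, ..., B ℓ)` of `[n]` (with `ℓ + 1` blocks),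
the alcoved polytope `Δ_S` in `H_n` is a simplex of dimension `ℓ`: it is the convex
hull of `ℓ + 1` affinely independent points. -/
theorem stmt7 {n ℓ : ℕ} (hn : 0 < n)
    (B : Fin (ℓ + 1) → Finset (Fin n))
    (hdisj : ∀ k k' : Fin (ℓ + 1), k ≠ k' → Disjoint (B k) (B k'))
    (hne : ∀ k, (B k).Nonempty)
    (hcover : ∀ i : Fin n, ∃ k, i ∈ B k) :
    ∃ V : Fin (ℓ + 1) → (Fin n → ℝ), AffineIndependent ℝ V ∧
      {x : Fin n → ℝ | (∑ i, x i) = 0 ∧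
          (∀ k : Fin (ℓ + 1), ∀ i ∈ B k, ∀ j ∈ B k, x i = x j) ∧
          (∀ k : Fin ℓ, ∀ i ∈ B k.castSucc, ∀ j ∈ B k.succ, x j ≤ x i) ∧
          (∀ i ∈ B (Fin.last ℓ), ∀ j ∈ B 0, x j - 1 ≤ x i)} =
        convexHull ℝ (Set.range V) :=
  stmt7_general B hdisj hne hcover
end

section
/- Let S = (B_1,...,B_ℓ) be an ordered set partition of [n] with n ∈ B_ℓ. Define N_S ⊂ R^{n-1} as the simplex with vertices 0, e_{B_1}, e_{B_1∪B_2}, ..., e_{B_1∪...∪B_{ℓ-1}}, where e_A = Σ_{i∈A} e_i. Then N_S equals the intersection of π^{-1}(Δ_S) with the hyperplane {x_n = 0} (with the last coordinate dropped), where π : R^n → H_n is the orthogonal projection and Δ_S is the alcoved simplex of S. -/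
/-!
The conditions cutting out `Δ_S`, apart from `∑ xᵢ = 0`, are invariant under adding a constant
vector, so `π⁻¹(Δ_S)` is cut out by them alone. A point satisfying them is constant, say `c k`,
on each block `B k`, and `x_n = 0` turns them into `1 ≥ c 0 ≥ c 1 ≥ ⋯ ≥ c ℓ = 0`. This order
simplex is the convex hull of the step vectors `(1, …, 1, 0, …, 0)`, the weights of `c` being
its successive drops `c (t - 1) - c t` (with `c (-1) = 1`). Pulling back along the block map and
dropping the last coordinate is linear, so it carries this hull onto the hull of the vertices
`e_{B 0 ∪ ⋯ ∪ B (t - 1)}`.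
-/

open Set

namespace Fin

variable {M : Type*} [AddCommGroup M]

theorem sum_univ_castSucc_sub_succ {n : ℕ} (f : Fin (n + 1) → M) :
    ∑ t : Fin n, (f t.castSucc - f t.succ) = f 0 - f (last n) := by
  induction n with
  | zero => simp
  | succ n ih =>
    rw [sum_univ_castSucc, succ_last]
    simp only [succ_castSucc]
    rw [ih fun j => f j.castSucc, castSucc_zero]
    abel

/-- Freezing `f` below `k.succ` kills exactly the terms with `t ≤ k`. -/
theorem sum_ite_lt_castSucc_sub_succ {n : ℕ} (f : Fin (n + 2) → M) (k : Fin (n + 1)) :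
    ∑ t : Fin (n + 1), (if k < t then f t.castSucc - f t.succ else 0) = f k.succ - f (last _) := by
  have key := sum_univ_castSucc_sub_succ fun j => f (max j k.succ)
  rw [max_eq_right (zero_le _), max_eq_left (le_last _)] at key
  rw [← key]
  refine Finset.sum_congr rfl fun t _ => ?_
  split_ifs with h
  · have hk : k.succ ≤ t.castSucc := succ_le_castSucc_iff.mpr h
    rw [max_eq_left hk, max_eq_left (hk.trans (castSucc_le_succ t))]
  · have hk : t.succ ≤ k.succ := succ_le_succ_iff.mpr (not_lt.mp h)
    rw [max_eq_right hk, max_eq_right ((castSucc_le_succ t).trans hk), sub_self]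

end Fin

def orderSimplex (n : ℕ) : Set (Fin (n + 1) → ℝ) :=
  {c | Antitone c ∧ c 0 ≤ 1 ∧ c (Fin.last n) = 0}

theorem convex_orderSimplex (n : ℕ) : Convex ℝ (orderSimplex n) := by
  rintro c ⟨hc, hc0, hcl⟩ d ⟨hd, hd0, hdl⟩ a b ha hb hab
  refine ⟨(hc.const_smul ha).add (hd.const_smul hb), ?_, ?_⟩
  · simp only [Pi.add_apply, Pi.smul_apply, smul_eq_mul]
    nlinarith
  · simp [hcl, hdl]

theorem indicator_Iio_mem_orderSimplex {n : ℕ} (t : Fin (n + 1)) :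
    (Iio t).indicator 1 ∈ orderSimplex n := by
  refine ⟨fun i j hij => ?_, ?_, ?_⟩
  · by_cases hj : j < t
    · simp [hj, hij.trans_lt hj]
    · rw [indicator_of_notMem (notMem_Iio.mpr (not_lt.mp hj))]
      exact indicator_nonneg (f := 1) (fun _ _ => zero_le_one) i
  · simp only [indicator_apply, mem_Iio, Pi.one_apply]
    split_ifs <;> norm_num
  · simp [Fin.le_last]

theorem convexHull_range_indicator_Iio (n : ℕ) :
    convexHull ℝ (range fun t : Fin (n + 1) => (Iio t).indicator 1) = orderSimplex n := by
  refine (convexHull_min ?_ (convex_orderSimplex n)).antisymm fun c ⟨hc, hc0, hcl⟩ => ?_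
  · rintro _ ⟨t, rfl⟩
    exact indicator_Iio_mem_orderSimplex t
  set D : Fin (n + 2) → ℝ := Matrix.vecCons 1 c
  have hD0 : D 0 = 1 := rfl
  have hDsucc : ∀ k, D k.succ = c k := fun _ => rfl
  have hDl : D (Fin.last _) = 0 := by rw [← Fin.succ_last, hDsucc, hcl]
  set w : Fin (n + 1) → ℝ := fun t => D t.castSucc - D t.succ
  have hw : ∀ t ∈ Finset.univ, 0 ≤ w t := fun t _ =>
    sub_nonneg.mpr (hc.vecCons hc0 (Fin.castSucc_le_succ t))
  have hw1 : ∑ t, w t = 1 := by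
    rw [Fin.sum_univ_castSucc_sub_succ, hDl, sub_zero, hD0]
  have hcw : ∑ t, w t • (Iio t).indicator 1 = c := by
    ext k
    simp only [Finset.sum_apply, Pi.smul_apply, indicator_apply, mem_Iio, Pi.one_apply,
      smul_eq_mul, mul_ite, mul_one, mul_zero]
    rw [Fin.sum_ite_lt_castSucc_sub_succ, hDl, sub_zero, hDsucc]
  rw [← hcw]
  exact (convex_convexHull ℝ _).sum_mem hw hw1 fun t _ => subset_convexHull ℝ _ (mem_range_self t)

theorem Finset.sum_sub_average {ι : Type*} [Fintype ι] [Nonempty ι] (x : ι → ℝ) :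
    ∑ i, (x i - (∑ r, x r) / Fintype.card ι) = 0 := by
  rw [Finset.sum_sub_distrib, Finset.sum_const, Finset.card_univ, nsmul_eq_mul,
    mul_div_cancel₀ _ (Nat.cast_ne_zero.mpr Fintype.card_ne_zero), sub_self]

theorem exists_mem_iff_eq_of_disjoint_of_cover {ι κ : Type*} (B : κ → Finset ι)
    (hdisj : ∀ k k', k ≠ k' → Disjoint (B k) (B k')) (hcover : ∀ i, ∃ k, i ∈ B k) :
    ∃ f : ι → κ, ∀ i k, i ∈ B k ↔ f i = k := by
  choose f hf using hcover
  refine ⟨f, fun i k => ⟨fun hi => ?_, fun h => h ▸ hf i⟩⟩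
  by_contra hne
  exact Finset.disjoint_left.mp (hdisj _ _ hne) (hf i) hi

section Alcove

variable {ι : Type*} {ℓ : ℕ} (B : Fin (ℓ + 1) → Finset ι)

/-- The inequalities defining `Δ_S`, without `∑ xᵢ = 0`. -/
def IsAlcoved (x : ι → ℝ) : Prop :=
  (∀ k : Fin (ℓ + 1), ∀ i ∈ B k, ∀ j ∈ B k, x i = x j) ∧
  (∀ k : Fin ℓ, ∀ i ∈ B k.castSucc, ∀ j ∈ B k.succ, x j ≤ x i) ∧
  (∀ i ∈ B (Fin.last ℓ), ∀ j ∈ B 0, x j - 1 ≤ x i)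

theorem isAlcoved_sub_const (x : ι → ℝ) (a : ℝ) :
    IsAlcoved B (fun i => x i - a) ↔ IsAlcoved B x := by
  simp only [IsAlcoved, sub_left_inj, sub_le_sub_iff_right, sub_right_comm _ a 1]

variable {B} {f : ι → Fin (ℓ + 1)}

theorem isAlcoved_iff (hB : ∀ i k, i ∈ B k ↔ f i = k) (hf : Function.Surjective f)
    (x : ι → ℝ) :
    IsAlcoved B x ↔ ∃ c : Fin (ℓ + 1) → ℝ, Antitone c ∧ c 0 - 1 ≤ c (Fin.last ℓ) ∧ x = c ∘ f := by
  constructor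
  · rintro ⟨hblock, hstep, hwrap⟩
    have hg : ∀ k, Function.surjInv hf k ∈ B k := fun k => (hB _ _).2 (Function.surjInv_eq hf k)
    refine ⟨x ∘ Function.surjInv hf, Fin.antitone_iff_succ_le.2 fun k => ?_, ?_, ?_⟩
    · exact hstep k _ (hg _) _ (hg _)
    · exact hwrap _ (hg _) _ (hg _)
    · funext i
      exact hblock (f i) i ((hB _ _).2 rfl) _ (hg _)
  · rintro ⟨c, hc, hwrap, rfl⟩
    simp only [IsAlcoved, Function.comp_apply, hB]
    refine ⟨?_, ?_, ?_⟩
    · rintro k i rfl j hj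
      rw [hj]
    · intro k i hi j hj
      rw [hi, hj]
      exact hc (Fin.castSucc_le_succ k)
    · intro i hi j hj
      rwa [hi, hj]

theorem isAlcoved_and_eq_zero_iff (hB : ∀ i k, i ∈ B k ↔ f i = k)
    (hf : Function.Surjective f) {i₀ : ι} (hi₀ : f i₀ = Fin.last ℓ) (x : ι → ℝ) :
    IsAlcoved B x ∧ x i₀ = 0 ↔ ∃ c ∈ orderSimplex ℓ, x = c ∘ f := by
  rw [isAlcoved_iff hB hf]
  constructor
  · rintro ⟨⟨c, hc, hwrap, rfl⟩, hc0⟩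
    rw [Function.comp_apply, hi₀] at hc0
    exact ⟨c, ⟨hc, by linarith, hc0⟩, rfl⟩
  · rintro ⟨c, ⟨hc, hc1, hc0⟩, rfl⟩
    refine ⟨⟨c, hc, by linarith, rfl⟩, ?_⟩
    rw [Function.comp_apply, hi₀, hc0]

end Alcove

open Classical in
/-- For an ordered set partition `S = (B 0, ..., B ℓ)` of `[m+1]` whose last block
contains the last element, the simplex `N_S` with vertices
`0, e_{B 0}, e_{B 0 ∪ B 1}, ...` equals the set obtained from
`π⁻¹(Δ_S) ∩ {x_n = 0}` by dropping the last coordinate, where `π` is the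
orthogonal projection onto `H_n` (subtracting the mean). -/
theorem stmt8 {m ℓ : ℕ}
    (B : Fin (ℓ + 1) → Finset (Fin (m + 1)))
    (hdisj : ∀ k k' : Fin (ℓ + 1), k ≠ k' → Disjoint (B k) (B k'))
    (hne : ∀ k, (B k).Nonempty)
    (hcover : ∀ i : Fin (m + 1), ∃ k, i ∈ B k)
    (hlast : Fin.last m ∈ B (Fin.last ℓ))
    (V : Fin (ℓ + 1) → (Fin m → ℝ))
    (hV : ∀ (t : Fin (ℓ + 1)) (i : Fin m),
      V t i = if ∃ s : Fin (ℓ + 1), s < t ∧ i.castSucc ∈ B s then (1 : ℝ) else 0)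
    (Δ : Set (Fin (m + 1) → ℝ))
    (hΔ : Δ = {x : Fin (m + 1) → ℝ | (∑ i, x i) = 0 ∧
        (∀ k : Fin (ℓ + 1), ∀ i ∈ B k, ∀ j ∈ B k, x i = x j) ∧
        (∀ k : Fin ℓ, ∀ i ∈ B k.castSucc, ∀ j ∈ B k.succ, x j ≤ x i) ∧
        (∀ i ∈ B (Fin.last ℓ), ∀ j ∈ B 0, x j - 1 ≤ x i)}) :
    convexHull ℝ (Set.range V) =
      {y : Fin m → ℝ | ∃ x : Fin (m + 1) → ℝ,
        (fun i => x i - (∑ r, x r) / ((m : ℝ) + 1)) ∈ Δ ∧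
        x (Fin.last m) = 0 ∧ y = fun i : Fin m => x i.castSucc} := by
  obtain ⟨blk, hB⟩ := exists_mem_iff_eq_of_disjoint_of_cover B hdisj hcover
  have hsurj : Function.Surjective blk := fun k => (hne k).imp fun i hi => (hB i k).1 hi
  have hπ : ∀ x : Fin (m + 1) → ℝ,
      (fun i => x i - (∑ r, x r) / ((m : ℝ) + 1)) ∈ Δ ↔ IsAlcoved B x := by
    intro x
    have hmean := Finset.sum_sub_average x
    rw [Fintype.card_fin, Nat.cast_succ] at hmean
    rw [hΔ]
    exact (and_iff_right hmean).trans (isAlcoved_sub_const B x _)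
  have hVstep : ∀ t, V t = LinearMap.funLeft ℝ ℝ (blk ∘ Fin.castSucc) ((Iio t).indicator 1) := by
    intro t
    funext i
    have hlt : (∃ s, s < t ∧ i.castSucc ∈ B s) ↔ blk i.castSucc < t :=
      ⟨fun ⟨s, hs, hi⟩ => (hB _ _).1 hi ▸ hs, fun h => ⟨_, h, (hB _ _).2 rfl⟩⟩
    simp only [hV, hlt, LinearMap.funLeft_apply, Function.comp_apply, indicator_apply, mem_Iio,
      Pi.one_apply]
  calc convexHull ℝ (range V)
      = LinearMap.funLeft ℝ ℝ (blk ∘ Fin.castSucc) '' orderSimplex ℓ := by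
        rw [← convexHull_range_indicator_Iio, LinearMap.image_convexHull, ← range_comp]
        exact congrArg _ (congrArg range (funext hVstep))
    _ = _ := by
        ext y
        simp only [mem_image, mem_ofPred_eq, hπ, ← and_assoc,
          isAlcoved_and_eq_zero_iff hB hsurj ((hB _ _).1 hlast)]
        constructor
        · rintro ⟨c, hc, rfl⟩
          exact ⟨c ∘ blk, ⟨c, hc, rfl⟩, rfl⟩
        · rintro ⟨_, ⟨c, hc, rfl⟩, rfl⟩
          exact ⟨c, hc, rfl⟩
end

section
/- Let T = (j_1,...,j_n) be a cyclic permutation of [n] and define its steps s_i = j_{i+1} − j_i mod n (indices cyclic). If every step s_i equals 1 or 3, then exactly one of the following holds: (1) all s_i = 1; (2) all s_i = 3 and n is not divisible by 3; (3) n ≡ 2 mod 4 and the steps alternate 1,3,1,3,...; (4) n ≡ 2 mod 4 and the steps alternate 3,1,3,1,.... -/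
private lemma aux_period {α : Sort*} {n : ℕ} (f : ℕ → α) (hf : ∀ t, f (t + n) = f t) (t : ℕ) :
    f (t % n) = f t := by
  conv_rhs => rw [← Nat.mod_add_div t n]
  generalize t / n = q
  induction q with
  | zero => simp
  | succ q ih => rw [show t % n + n * (q + 1) = (t % n + n * q) + n by ring, hf, ih]

private lemma aux_parity {n m : ℕ} (hn : n % 2 = 0) : (m % n) % 2 = m % 2 := by
  conv_rhs => rw [← Nat.mod_add_div m n]
  obtain ⟨h, rfl⟩ : ∃ h, n = 2 * h := ⟨n / 2, by omega⟩
  rw [show m % (2 * h) + 2 * h * (m / (2 * h)) = m % (2 * h) + 2 * (h * (m / (2 * h))) by ring,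
    Nat.add_mul_mod_self_left]

/-- Let `(j 0, j 1, ..., j (n-1))` be a cyclic permutation of `[n]` (given as an
`n`-periodic enumeration) and let `s t` be the residue mod `n` of
`j (t+1) - j t`.  If every step is `1` or `3`, then exactly one of the following
holds: all steps are `1`; `n` is not divisible by `3` and all steps are `3`;
`n ≡ 2 (mod 4)` and the steps alternate `1,3,1,3,...`; or `n ≡ 2 (mod 4)` and the
steps alternate `3,1,3,1,...`. -/
theorem stmt12 {n : ℕ} (hn : 0 < n) (j : ℕ → Fin n)
    (hper : ∀ t, j (t + n) = j t)
    (hbij : ∀ y : Fin n, ∃! t : ℕ, t < n ∧ j t = y)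
    (s : ℕ → ℕ)
    (hs : ∀ t, s t = ((j (t + 1)).val + n - (j t).val) % n)
    (h13 : ∀ t, s t = 1 ∨ s t = 3)
    (P1 P2 P3 P4 : Prop)
    (hP1 : P1 ↔ ∀ t, s t = 1)
    (hP2 : P2 ↔ (¬(3 ∣ n) ∧ ∀ t, s t = 3))
    (hP3 : P3 ↔ (n % 4 = 2 ∧ ∀ t, (Even t → s t = 1) ∧ (Odd t → s t = 3)))
    (hP4 : P4 ↔ (n % 4 = 2 ∧ ∀ t, (Even t → s t = 3) ∧ (Odd t → s t = 1))) :
    (P1 ∨ P2 ∨ P3 ∨ P4) ∧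
      ¬(P1 ∧ P2) ∧ ¬(P1 ∧ P3) ∧ ¬(P1 ∧ P4) ∧
      ¬(P2 ∧ P3) ∧ ¬(P2 ∧ P4) ∧ ¬(P3 ∧ P4) := by
  constructor
  · -- main disjunction
    have sn : ∀ t, s t < n := fun t => by rw [hs]; exact Nat.mod_lt _ hn
    by_cases hn4 : n < 4
    · left; rw [hP1]; intro t; have := sn t; rcases h13 t with h | h
      · exact h
      · omega
    push_neg at hn4
    haveI : NeZero n := ⟨by omega⟩
    set J : ℕ → ZMod n := fun t => ((j t).val : ZMod n) with hJdef
    have hsper : ∀ t, s (t + n) = s t := by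
      intro t; rw [hs, hs, show t + n + 1 = t + 1 + n by ring, hper, hper]
    have jinj : ∀ u v, j u = j v → u % n = v % n := by
      intro u v h
      obtain ⟨w, -, hw⟩ := hbij (j u)
      have h1 := hw (u % n) ⟨Nat.mod_lt _ hn, aux_period j hper u⟩
      have h2 := hw (v % n) ⟨Nat.mod_lt _ hn, by rw [aux_period j hper v, h]⟩
      rw [h1, h2]
    have Jinj : ∀ u v, J u = J v → (u : ZMod n) = (v : ZMod n) := by
      intro u v h
      have hj : j u = j v := Fin.ext (by
        have := congrArg ZMod.val h
        rwa [ZMod.val_cast_of_lt (j u).isLt, ZMod.val_cast_of_lt (j v).isLt] at this)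
      rw [ZMod.natCast_eq_natCast_iff]
      exact jinj u v hj
    have hstep : ∀ t, J (t + 1) = J t + (s t : ZMod n) := by
      intro t
      have h1 : (j t).val ≤ (j (t + 1)).val + n := by have := (j (t + 1)).isLt; omega
      have h2 : (s t : ZMod n) = (((j (t + 1)).val + n - (j t).val : ℕ) : ZMod n) := by
        rw [hs t, ZMod.natCast_mod]
      rw [h2, Nat.cast_sub h1]
      push_cast
      simp only [hJdef, ZMod.natCast_self]
      ring
    have hτ0 : ∀ a : ZMod n, ∃ t, t < n ∧ J t = a := by
      intro a
      obtain ⟨t, ⟨ht, hjt⟩, -⟩ := hbij ⟨a.val, a.val_lt⟩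
      refine ⟨t, ht, ?_⟩
      simp only [hJdef, hjt]
      rw [ZMod.natCast_val, ZMod.cast_id]
    choose τ hτ using hτ0
    set e : ZMod n → ℕ := fun a => s (τ a) with hedef
    have he13 : ∀ a, e a = 1 ∨ e a = 3 := fun a => h13 _
    have hsucc : ∀ a, J (τ a + 1) = a + (e a : ZMod n) := by
      intro a; rw [hstep, (hτ a).2]
    have two_ne : (2 : ZMod n) ≠ 0 := by
      intro h
      have h2 : ((2 : ℕ) : ZMod n) = 0 := by push_cast; exact h
      rw [ZMod.natCast_eq_zero_iff] at h2
      have := Nat.le_of_dvd (by norm_num) h2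
      omega
    have eA : ∀ a : ZMod n, e a = 3 → e (a + 2) = 3 := by
      intro a ha
      rcases he13 (a + 2) with h | h
      · exfalso
        have h1 : J (τ a + 1) = a + 3 := by rw [hsucc, ha]; norm_num
        have h2 : J (τ (a + 2) + 1) = a + 3 := by rw [hsucc, h]; push_cast; ring
        have h3 := Jinj _ _ (h1.trans h2.symm)
        push_cast at h3
        have h4 : (τ a : ZMod n) = (τ (a + 2) : ZMod n) := by
          exact add_right_cancel h3
        have h5 : τ a = τ (a + 2) := by
          have := congrArg ZMod.val h4
          rwa [ZMod.val_cast_of_lt (hτ a).1, ZMod.val_cast_of_lt (hτ (a + 2)).1] at this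
        have h6 : a = a + 2 := by
          calc a = J (τ a) := ((hτ a).2).symm
            _ = J (τ (a + 2)) := by rw [h5]
            _ = a + 2 := (hτ (a + 2)).2
        exact two_ne (left_eq_add.mp h6)
      · exact h
    have eA' : ∀ (a : ZMod n) (k : ℕ), e a = 3 → e (a + 2 * (k : ZMod n)) = 3 := by
      intro a k ha
      induction k with
      | zero => simpa using ha
      | succ k ih =>
        have h := eA _ ih
        rw [show ((k + 1 : ℕ) : ZMod n) = (k : ZMod n) + 1 by push_cast; ring]
        rw [show a + 2 * ((k : ZMod n) + 1) = a + 2 * (k : ZMod n) + 2 by ring]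
        exact h
    have hreach : ∀ a b : ZMod n, a + ((b.val + n - a.val : ℕ) : ZMod n) = b := by
      intro a b
      have h1 : a.val ≤ b.val + n := by have := a.val_lt; omega
      rw [Nat.cast_sub h1]
      push_cast
      rw [ZMod.natCast_val, ZMod.natCast_val, ZMod.cast_id, ZMod.cast_id, ZMod.natCast_self]
      ring
    have cover : ∀ (a b : ZMod n) (m : ℕ), m % 2 = 0 → a + (m : ZMod n) = b →
        ∃ k : ℕ, b = a + 2 * (k : ZMod n) := by
      intro a b m hm heq
      refine ⟨m / 2, ?_⟩
      rw [show (2 : ZMod n) * ((m / 2 : ℕ) : ZMod n) = ((2 * (m / 2) : ℕ) : ZMod n) by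
            push_cast; ring,
        show 2 * (m / 2) = m by omega, heq]
    have hse : ∀ t, s t = e (J t) := by
      intro t
      have h1 := Jinj (τ (J t)) t (hτ (J t)).2
      rw [ZMod.natCast_eq_natCast_iff] at h1
      have h1' : τ (J t) % n = t % n := h1
      have h2 : s (τ (J t)) = s (τ (J t) % n) := (aux_period s hsper _).symm
      have h3 : s t = s (t % n) := (aux_period s hsper t).symm
      simp only [hedef]
      rw [h2, h3, h1']
    by_cases hall1 : ∀ a : ZMod n, e a = 1
    · left; rw [hP1]; intro t; rw [hse t]; exact hall1 _
    push_neg at hall1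
    obtain ⟨a, ha⟩ := hall1
    have ha3 : e a = 3 := by rcases he13 a with h | h; exact absurd h ha; exact h
    by_cases hall3 : ∀ b : ZMod n, e b = 3
    · right; left; rw [hP2]
      have hs3 : ∀ t, s t = 3 := fun t => by rw [hse t]; exact hall3 _
      refine ⟨?_, hs3⟩
      intro h3n
      have hJk : ∀ k : ℕ, J k = J 0 + ((3 * k : ℕ) : ZMod n) := by
        intro k; induction k with
        | zero => simp
        | succ k ih => rw [hstep, ih, hs3]; push_cast; ring
      have h0 : J (n / 3) = J 0 := by
        rw [hJk, show 3 * (n / 3) = n by omega, ZMod.natCast_self, add_zero]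
      have h1 := Jinj _ _ h0
      rw [ZMod.natCast_eq_natCast_iff] at h1
      have h1' : (n / 3) % n = 0 % n := h1
      rw [Nat.mod_eq_of_lt (by omega), Nat.zero_mod] at h1'
      omega
    push_neg at hall3
    obtain ⟨b, hb⟩ := hall3
    have hb1 : e b = 1 := by rcases he13 b with h | h; exact h; exact absurd h hb
    have hneven : n % 2 = 0 := by
      by_contra hodd
      have hodd' : n % 2 = 1 := by omega
      have hav := a.val_lt
      have hbv := b.val_lt
      obtain ⟨k, hk⟩ : ∃ k : ℕ, b = a + 2 * (k : ZMod n) := by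
        rcases Nat.even_or_odd (b.val + n - a.val) with h | h
        · rw [Nat.even_iff] at h
          exact cover a b _ h (hreach a b)
        · rw [Nat.odd_iff] at h
          refine cover a b (b.val + n - a.val + n) (by omega) ?_
          rw [Nat.cast_add, ZMod.natCast_self, add_zero]
          exact hreach a b
      have h3 := eA' a k ha3
      rw [← hk] at h3
      omega
    -- mixed case, n even
    have hclass3 : ∀ c : ZMod n, c.val % 2 = a.val % 2 → e c = 3 := by
      intro c hc
      have hav := a.val_lt
      have hcv := c.val_lt
      obtain ⟨k, hk⟩ := cover a c (c.val + n - a.val) (by omega) (hreach a c)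
      rw [hk]; exact eA' a k ha3
    have hbpar : b.val % 2 ≠ a.val % 2 := fun h => by have := hclass3 b h; omega
    have hclass1 : ∀ c : ZMod n, c.val % 2 ≠ a.val % 2 → e c = 1 := by
      intro c hc
      rcases he13 c with h | h
      · exact h
      · exfalso
        have hcv := c.val_lt
        have hbv := b.val_lt
        obtain ⟨k, hk⟩ := cover c b (b.val + n - c.val) (by omega) (hreach c b)
        have h3 := eA' c k h
        rw [← hk] at h3
        omega
    have hflip : ∀ t, (J (t + 1)).val % 2 ≠ (J t).val % 2 := by
      intro t
      rw [hstep t, ZMod.val_add, ZMod.val_cast_of_lt (sn t), aux_parity hneven]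
      rcases h13 t with h | h <;> omega
    have hpar : ∀ t, (J t).val % 2 = ((J 0).val + t) % 2 := by
      intro t
      induction t with
      | zero => simp
      | succ t ih => have := hflip t; omega
    have hsum : ∀ t, s t + s (t + 1) = 4 := by
      intro t
      have hf := hflip t
      rcases h13 t with h | h <;> rcases h13 (t + 1) with h' | h'
      · exfalso
        rw [hse t] at h; rw [hse (t + 1)] at h'
        have c1 : (J t).val % 2 ≠ a.val % 2 := fun hc => by have := hclass3 _ hc; omega
        have c2 : (J (t + 1)).val % 2 ≠ a.val % 2 := fun hc => by have := hclass3 _ hc; omega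
        omega
      · omega
      · omega
      · exfalso
        rw [hse t] at h; rw [hse (t + 1)] at h'
        have c1 : (J t).val % 2 = a.val % 2 := by
          by_contra hc; have := hclass1 _ hc; omega
        have c2 : (J (t + 1)).val % 2 = a.val % 2 := by
          by_contra hc; have := hclass1 _ hc; omega
        omega
    have hn42 : n % 4 = 2 := by
      by_contra h42
      have h40 : n % 4 = 0 := by omega
      have hJ2k : ∀ k : ℕ, J (2 * k) = J 0 + ((4 * k : ℕ) : ZMod n) := by
        intro k
        induction k with
        | zero => simp
        | succ k ih =>
          have e2 := hstep (2 * k + 1)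
          have e1 := hstep (2 * k)
          have e3 := hsum (2 * k)
          have e4 : ((s (2 * k) : ZMod n)) + ((s (2 * k + 1) : ZMod n)) = 4 := by
            rw [show ((4 : ZMod n)) = ((4 : ℕ) : ZMod n) by push_cast; ring, ← e3]
            push_cast; ring
          rw [show 2 * (k + 1) = 2 * k + 1 + 1 by ring, e2, e1, ih]
          push_cast
          push_cast at e4
          linear_combination e4
      have h0 : J (2 * (n / 4)) = J 0 := by
        rw [hJ2k, show 4 * (n / 4) = n by omega, ZMod.natCast_self, add_zero]
      have h1 := Jinj _ _ h0
      rw [ZMod.natCast_eq_natCast_iff] at h1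
      have h1' : (2 * (n / 4)) % n = 0 % n := h1
      rw [Nat.mod_eq_of_lt (by omega), Nat.zero_mod] at h1'
      omega
    by_cases h0 : (J 0).val % 2 = a.val % 2
    · right; right; right; rw [hP4]
      refine ⟨hn42, fun t => ⟨fun ht => ?_, fun ht => ?_⟩⟩
      · rw [hse t]; apply hclass3; rw [hpar t]; rw [Nat.even_iff] at ht; omega
      · rw [hse t]; apply hclass1; rw [hpar t]; rw [Nat.odd_iff] at ht; omega
    · right; right; left; rw [hP3]
      refine ⟨hn42, fun t => ⟨fun ht => ?_, fun ht => ?_⟩⟩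
      · rw [hse t]; apply hclass1; rw [hpar t]; rw [Nat.even_iff] at ht; omega
      · rw [hse t]; apply hclass3; rw [hpar t]; rw [Nat.odd_iff] at ht; omega
  · refine ⟨fun ⟨h1, h2⟩ => ?_, fun ⟨h1, h3⟩ => ?_, fun ⟨h1, h4⟩ => ?_,
      fun ⟨h2, h3⟩ => ?_, fun ⟨h2, h4⟩ => ?_, fun ⟨h3, h4⟩ => ?_⟩
    · have := (hP1.mp h1) 0; have := (hP2.mp h2).2 0; omega
    · have := (hP1.mp h1) 1; have := ((hP3.mp h3).2 1).2 odd_one; omega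
    · have := (hP1.mp h1) 0; have := ((hP4.mp h4).2 0).1 Even.zero; omega
    · have := (hP2.mp h2).2 0; have := ((hP3.mp h3).2 0).1 Even.zero; omega
    · have := (hP2.mp h2).2 1; have := ((hP4.mp h4).2 1).2 odd_one; omega
    · have := ((hP3.mp h3).2 0).1 Even.zero; have := ((hP4.mp h4).2 0).1 Even.zero; omega
end

section
/- Suppose T = (j_1,...,j_n) is a cyclic order on [n] with n ≥ 7, all of whose steps s_i = j_{i+1} − j_i mod n equal 1 or 3, and T is not the standard cyclic order (1,2,...,n). Then T is 4- or 6-interlaced with the standard order: either there exist distinct a,b,c,d appearing in cyclic order a,b,c,d in (1,...,n) and in cyclic order c,b,a,d in T; or there exist distinct a,b,c,d,e,f appearing in cyclic order a,b,c,d,e,f in (1,...,n) and in one of the cyclic orders c,d,a,b,e,f or a,d,e,b,c,f in T. -/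
/-!
Let `σ` be the successor map of `T`, so `σ x - x ∈ {1, 3}`. The displacement `σ x - x` is
`2`-periodic in `x`: if `σ x = x + 3` and `σ (x + 2) = x + 3`, injectivity fails, and if
`σ x = x + 1` and `σ (x + 2) = x + 5`, then `x + 3` has no preimage. For odd `n` this forces a
constant displacement. Hence, starting from `z = j 0`, `T` is either the standard order, or
`z, z + 3, z + 6, …` (possible only for `3 ∤ n`), or alternately adds `1` and `3` (possible only
for `n ≡ 2 mod 4`). In the last two cases a few elements `z + i` with `i ≤ 6` are explicitly
interlaced.
-/

/-- Four elements appear in this cyclic order in the cyclic sequence `j`. -/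
def CycOrd4 {n : ℕ} (j : ℕ → Fin n) (a b c d : Fin n) : Prop :=
  ∃ t1 t2 t3 t4 : ℕ, t1 < t2 ∧ t2 < t3 ∧ t3 < t4 ∧ t4 < t1 + n ∧
    j t1 = a ∧ j t2 = b ∧ j t3 = c ∧ j t4 = d

/-- Six elements appear in this cyclic order in the cyclic sequence `j`. -/
def CycOrd6 {n : ℕ} (j : ℕ → Fin n) (a b c d e f : Fin n) : Prop :=
  ∃ t1 t2 t3 t4 t5 t6 : ℕ, t1 < t2 ∧ t2 < t3 ∧ t3 < t4 ∧ t4 < t5 ∧ t5 < t6 ∧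
    t6 < t1 + n ∧ j t1 = a ∧ j t2 = b ∧ j t3 = c ∧ j t4 = d ∧ j t5 = e ∧ j t6 = f

open Function

section Successor

variable {α : Type*} {n : ℕ} {j : ℕ → α}

theorem mod_eq_of_apply_eq (hper : Periodic j n) (hbij : ∀ y, ∃! t, t < n ∧ j t = y)
    {s t : ℕ} (h : j s = j t) : s % n = t % n := by
  have hn : 0 < n := by obtain ⟨u, ⟨hu, -⟩, -⟩ := hbij (j 0); omega
  obtain ⟨u, -, hu⟩ := hbij (j t)
  rw [hu (s % n) ⟨Nat.mod_lt s hn, by rw [hper.map_mod_nat, h]⟩,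
    hu (t % n) ⟨Nat.mod_lt t hn, hper.map_mod_nat t⟩]

theorem exists_bijective_succ (hper : Periodic j n) (hbij : ∀ y, ∃! t, t < n ∧ j t = y) :
    ∃ σ : α → α, Bijective σ ∧ ∀ t, j (t + 1) = σ (j t) := by
  choose τ hτn hτ using fun y ↦ (hbij y).exists
  have hsucc : ∀ t, j (t + 1) = j (τ (j t) + 1) := fun t ↦ by
    rw [← hper.map_mod_nat (t + 1), ← hper.map_mod_nat (τ (j t) + 1)]
    exact congrArg j (Nat.ModEq.add_right 1 (mod_eq_of_apply_eq hper hbij (hτ (j t)).symm))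
  refine ⟨fun y ↦ j (τ y + 1), ⟨fun y y' h ↦ ?_, fun y ↦ ⟨j (τ y + n - 1), ?_⟩⟩, hsucc⟩
  · have h' := Nat.ModEq.add_right_cancel' 1 (mod_eq_of_apply_eq hper hbij h)
    rw [Nat.ModEq, Nat.mod_eq_of_lt (hτn y), Nat.mod_eq_of_lt (hτn y')] at h'
    rw [← hτ y, ← hτ y', h']
  · have hn := hτn y
    dsimp only
    rw [← hsucc, Nat.sub_add_cancel (by omega), hper, hτ y]

theorem apply_eq_iterate {σ : α → α} (h : ∀ t, j (t + 1) = σ (j t)) (t : ℕ) :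
    j t = σ^[t] (j 0) := by
  induction t with
  | zero => rfl
  | succ t ih => rw [h, ih, iterate_succ_apply']

end Successor

section Displacement

variable {R : Type*} [CommRing R] {f : R → R}

def displacement (f : R → R) (x : R) : R := f x - x

theorem apply_eq_add_displacement (f : R → R) (x : R) : f x = x + displacement f x := by
  simp [displacement]

theorem displacement_add_two (hf : Bijective f) (hstep : ∀ x, f x = x + 1 ∨ f x = x + 3)
    (h2 : (2 : R) ≠ 0) (x : R) : displacement f (x + 2) = displacement f x := by
  unfold displacement
  rcases hstep x with hx | hx <;> rcases hstep (x + 2) with hx2 | hx2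
  · rw [hx, hx2]; ring
  · -- then neither `x` nor `x + 2` could be the preimage of `x + 3`
    obtain ⟨y, hy⟩ := hf.2 (x + 3)
    rcases hstep y with h | h
    · obtain rfl : y = x + 2 := by linear_combination hy - h
      exact absurd (hx2.symm.trans hy) fun h' ↦ h2 (by linear_combination h')
    · obtain rfl : y = x := by linear_combination hy - h
      exact absurd (hx.symm.trans hy) fun h' ↦ h2 (by linear_combination -h')
  · exact absurd (hf.1 (hx.trans (by linear_combination -hx2))) fun h' ↦
      h2 (by linear_combination -h')
  · rw [hx, hx2]; ring

theorem displacement_add_two_mul (h : ∀ x, displacement f (x + 2) = displacement f x)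
    (x : R) (m : ℕ) : displacement f (x + 2 * m) = displacement f x := by
  induction m with
  | zero => simp
  | succ m ih => rw [Nat.cast_succ, mul_add_one, ← add_assoc, h, ih]

theorem displacement_add_one_of_odd (h : ∀ x, displacement f (x + 2) = displacement f x)
    {n : ℕ} (hn : (n : R) = 0) (hodd : Odd n) (x : R) :
    displacement f (x + 1) = displacement f x := by
  obtain ⟨m, rfl⟩ := hodd
  rw [← displacement_add_two_mul h x (m + 1)]
  congr 1
  push_cast at hn ⊢
  linear_combination -hn

theorem iterate_two_mul_of_displacement (h : ∀ x, displacement f (x + 2) = displacement f x)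
    {a b : ℕ} (ha : Odd a) (hb : Odd b) {z : R} (hz : displacement f z = a)
    (hz1 : displacement f (z + 1) = b) (k : ℕ) :
    f^[2 * k] z = z + (k * (a + b) : ℕ) ∧ f^[2 * k + 1] z = z + (k * (a + b) + a : ℕ) := by
  obtain ⟨e, rfl⟩ := ha
  obtain ⟨e', rfl⟩ := hb
  induction k with
  | zero => simp [← hz, displacement]
  | succ k ih =>
    have hnext : f^[2 * (k + 1)] z = z + ((k + 1) * (2 * e + 1 + (2 * e' + 1)) : ℕ) := by
      rw [show 2 * (k + 1) = 2 * k + 1 + 1 by ring, iterate_succ_apply', ih.2,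
        apply_eq_add_displacement f,
        show (z + ((k * (2 * e + 1 + (2 * e' + 1)) + (2 * e + 1) : ℕ) : R))
          = z + 1 + 2 * ((k * (e + e' + 1) + e : ℕ) : R) by push_cast; ring,
        displacement_add_two_mul h, hz1]
      push_cast; ring
    refine ⟨hnext, ?_⟩
    rw [iterate_succ_apply', hnext, apply_eq_add_displacement f, show
      (z + (((k + 1) * (2 * e + 1 + (2 * e' + 1)) : ℕ) : R))
        = z + 2 * (((k + 1) * (e + e' + 1) : ℕ) : R) by push_cast; ring,
      displacement_add_two_mul h, hz]
    push_cast; ring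

theorem iterate_of_displacement_eq (h : ∀ x, displacement f (x + 2) = displacement f x)
    {a : ℕ} (ha : Odd a) {z : R} (hz : displacement f z = a)
    (hz1 : displacement f (z + 1) = a) (t : ℕ) : f^[t] z = z + (t * a : ℕ) := by
  obtain ⟨k, rfl | rfl⟩ := Nat.even_or_odd' t
  · rw [(iterate_two_mul_of_displacement h ha ha hz hz1 k).1]; congr 2; ring
  · rw [(iterate_two_mul_of_displacement h ha ha hz hz1 k).2]; congr 2; ring

theorem iterate_trichotomy (hf : Bijective f) (hstep : ∀ x, f x = x + 1 ∨ f x = x + 3)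
    (h2 : (2 : R) ≠ 0) {n : ℕ} (hn : (n : R) = 0) (z : R) :
    (∀ t, f^[t] z = z + (t : ℕ)) ∨ (∀ t, f^[t] z = z + (t * 3 : ℕ)) ∨
      Even n ∧ ∃ a, (a = 1 ∨ a = 3) ∧
        ∀ k, f^[2 * k] z = z + (k * 4 : ℕ) ∧ f^[2 * k + 1] z = z + (k * 4 + a : ℕ) := by
  have hdisp := displacement_add_two hf hstep h2
  have hdisp13 : ∀ x, displacement f x = (1 : ℕ) ∨ displacement f x = (3 : ℕ) := fun x ↦ by
    rcases hstep x with h | h <;> simp [displacement, h]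
  have heven : displacement f (z + 1) ≠ displacement f z → Even n := fun hne ↦ by
    by_contra hodd
    exact hne (displacement_add_one_of_odd hdisp hn (Nat.not_even_iff_odd.mp hodd) z)
  have h31 : ((3 : ℕ) : R) ≠ (1 : ℕ) := fun h ↦ h2 (by push_cast at h; linear_combination h)
  rcases hdisp13 z with ha | ha <;> rcases hdisp13 (z + 1) with hb | hb
  · exact Or.inl fun t ↦ by simpa using iterate_of_displacement_eq hdisp odd_one ha hb t
  · refine Or.inr (Or.inr ⟨heven (by rw [ha, hb]; exact h31), 1, Or.inl rfl, fun k ↦ ?_⟩)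
    simpa using iterate_two_mul_of_displacement hdisp odd_one (by decide) ha hb k
  · refine Or.inr (Or.inr ⟨heven (by rw [ha, hb]; exact h31.symm), 3, Or.inr rfl, fun k ↦ ?_⟩)
    simpa using iterate_two_mul_of_displacement hdisp (by decide) odd_one ha hb k
  · exact Or.inr (Or.inl (iterate_of_displacement_eq hdisp (by decide) ha hb))

end Displacement

section FinCyclic

open Fin.CommRing

variable {n : ℕ} [NeZero n]

theorem Fin.natCast_eq_natCast_of_eq_add_mul {a b q : ℕ} (h : a = b + n * q) :
    (a : Fin n) = b := by
  simp [h]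

theorem Fin.natCast_modEq_of_dvd {a b d : ℕ} (hd : d ∣ n) (h : (a : Fin n) = b) :
    a ≡ b [MOD d] :=
  Nat.ModEq.of_dvd hd (by simpa [Nat.ModEq, Fin.ext_iff] using h)

theorem Fin.eq_add_natCast_iff (a b : Fin n) {k : ℕ} (hk : k < n) :
    b = a + k ↔ (b.val + n - a.val) % n = k := by
  rw [← sub_eq_iff_eq_add', Fin.ext_iff, Fin.val_sub, Fin.val_natCast, Nat.mod_eq_of_lt hk,
    Nat.add_comm, Nat.add_sub_assoc a.isLt.le]

theorem Fin.pairwise_ne_map_add_natCast (z : Fin n) {l : List ℕ} {k : ℕ} (hl : l.Nodup)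
    (hle : ∀ i ∈ l, i ≤ k) (hk : k < n) :
    (l.map fun i : ℕ ↦ z + (i : Fin n)).Pairwise (· ≠ ·) := by
  refine hl.map_on fun i hi i' hi' h ↦ ?_
  simpa [Fin.ext_iff, Nat.mod_eq_of_lt ((hle i hi).trans_lt hk),
    Nat.mod_eq_of_lt ((hle i' hi').trans_lt hk)] using h

theorem exists_bijective_iterate {j : ℕ → Fin n} (hn : 3 < n) (hper : Periodic j n)
    (hbij : ∀ y, ∃! t, t < n ∧ j t = y)
    (h13 : ∀ t, ((j (t + 1)).val + n - (j t).val) % n = 1 ∨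
      ((j (t + 1)).val + n - (j t).val) % n = 3) :
    ∃ σ : Fin n → Fin n, Bijective σ ∧ (∀ x, σ x = x + 1 ∨ σ x = x + 3) ∧
      ∀ t, j t = σ^[t] (j 0) := by
  obtain ⟨σ, hσ, hjσ⟩ := exists_bijective_succ hper hbij
  refine ⟨σ, hσ, fun x ↦ ?_, apply_eq_iterate hjσ⟩
  obtain ⟨t, -, rfl⟩ := (hbij x).exists
  have h1 := Fin.eq_add_natCast_iff (j t) (j (t + 1)) (k := 1) (by omega)
  have h3 := Fin.eq_add_natCast_iff (j t) (j (t + 1)) (k := 3) (by omega)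
  push_cast at h1 h3
  rw [← hjσ, h1, h3]
  exact h13 t

theorem cycOrd4_natCast_add (z : Fin n) {i₁ i₂ i₃ i₄ : ℕ} (h₁₂ : i₁ < i₂) (h₂₃ : i₂ < i₃)
    (h₃₄ : i₃ < i₄) (h₄₁ : i₄ < i₁ + n) :
    CycOrd4 Nat.cast (z + (i₁ : Fin n)) (z + (i₂ : Fin n)) (z + (i₃ : Fin n)) (z + (i₄ : Fin n)) :=
  ⟨z.val + i₁, z.val + i₂, z.val + i₃, z.val + i₄, by omega, by omega, by omega, by omega,
    by simp, by simp, by simp, by simp⟩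

theorem cycOrd6_natCast_add (z : Fin n) {i₁ i₂ i₃ i₄ i₅ i₆ : ℕ} (h₁₂ : i₁ < i₂) (h₂₃ : i₂ < i₃)
    (h₃₄ : i₃ < i₄) (h₄₅ : i₄ < i₅) (h₅₆ : i₅ < i₆) (h₆₁ : i₆ < i₁ + n) :
    CycOrd6 Nat.cast (z + (i₁ : Fin n)) (z + (i₂ : Fin n)) (z + (i₃ : Fin n)) (z + (i₄ : Fin n))
      (z + (i₅ : Fin n)) (z + (i₆ : Fin n)) :=
  ⟨z.val + i₁, z.val + i₂, z.val + i₃, z.val + i₄, z.val + i₅, z.val + i₆, by omega, by omega,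
    by omega, by omega, by omega, by omega, by simp, by simp, by simp, by simp, by simp, by simp⟩
theorem interlaced_of_iterate_three {j : ℕ → Fin n} (hn : 7 ≤ n) (hsurj : Surjective j)
    {z : Fin n} (hj : ∀ t, j t = z + (t * 3 : ℕ)) :
    ∃ a b c d : Fin n, [a, b, c, d].Pairwise (· ≠ ·) ∧
      CycOrd4 Nat.cast a b c d ∧ CycOrd4 j c b a d := by
  have hj' : ∀ t i q, t * 3 = i + n * q → j t = z + (i : Fin n) := fun t i q h ↦ by
    rw [hj, Fin.natCast_eq_natCast_of_eq_add_mul h]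
  obtain ⟨m, hm | hm | hm⟩ : ∃ m, n = 3 * m ∨ n = 3 * m + 1 ∨ n = 3 * m + 2 := ⟨n / 3, by omega⟩
  · -- the orbit `z + 3ℕ` misses `z + 1`
    obtain ⟨t, ht⟩ := hsurj (z + (1 : ℕ))
    rw [hj] at ht
    have := Fin.natCast_modEq_of_dvd (d := 3) ⟨m, hm⟩ (add_left_cancel ht)
    simp [Nat.ModEq] at this
  · refine ⟨z + (0 : ℕ), z + (1 : ℕ), z + (2 : ℕ), z + (3 : ℕ),
      Fin.pairwise_ne_map_add_natCast z (l := [0, 1, 2, 3]) (k := 3) (by decide) (by decide)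
        (by omega),
      cycOrd4_natCast_add z (by omega) (by omega) (by omega) (by omega),
      m + 1, 2 * m + 1, n, n + 1, by omega, by omega, by omega, by omega,
      hj' _ 2 1 (by omega), hj' _ 1 2 (by omega), hj' _ 0 3 (by omega), hj' _ 3 3 (by omega)⟩
  · refine ⟨z + (0 : ℕ), z + (2 : ℕ), z + (4 : ℕ), z + (6 : ℕ),
      Fin.pairwise_ne_map_add_natCast z (l := [0, 2, 4, 6]) (k := 6) (by decide) (by decide)
        (by omega),
      cycOrd4_natCast_add z (by omega) (by omega) (by omega) (by omega),
      m + 2, 2 * m + 2, n, n + 2, by omega, by omega, by omega, by omega,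
      hj' _ 4 1 (by omega), hj' _ 2 2 (by omega), hj' _ 0 3 (by omega), hj' _ 6 3 (by omega)⟩

theorem interlaced_of_iterate_alternating {j : ℕ → Fin n} (hn : 7 ≤ n) (heven : Even n)
    (hsurj : Surjective j) {z : Fin n} {a : ℕ} (ha : a = 1 ∨ a = 3)
    (hj : ∀ k, j (2 * k) = z + (k * 4 : ℕ) ∧ j (2 * k + 1) = z + (k * 4 + a : ℕ)) :
    ∃ a b c d e f : Fin n, [a, b, c, d, e, f].Pairwise (· ≠ ·) ∧ CycOrd6 Nat.cast a b c d e f ∧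
      (CycOrd6 j c d a b e f ∨ CycOrd6 j a d e b c f) := by
  have hj₀ : ∀ k i q, k * 4 = i + n * q → j (2 * k) = z + (i : Fin n) := fun k i q h ↦ by
    rw [(hj k).1, Fin.natCast_eq_natCast_of_eq_add_mul h]
  have hj₁ : ∀ k i q, k * 4 + a = i + n * q → j (2 * k + 1) = z + (i : Fin n) := fun k i q h ↦ by
    rw [(hj k).2, Fin.natCast_eq_natCast_of_eq_add_mul h]
  obtain ⟨m, hm | hm⟩ : ∃ m, n = 4 * m ∨ n = 4 * m + 2 := by
    obtain ⟨r, hr⟩ := heven; exact ⟨n / 4, by omega⟩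
  · -- the orbit `z + 4ℕ ∪ (z + a + 4ℕ)` misses `z + 2`
    obtain ⟨t, ht⟩ := hsurj (z + (2 : ℕ))
    obtain ⟨k, rfl | rfl⟩ := Nat.even_or_odd' t
    · rw [(hj k).1] at ht
      have := Fin.natCast_modEq_of_dvd (d := 4) ⟨m, hm⟩ (add_left_cancel ht)
      simp [Nat.ModEq] at this
    · rw [(hj k).2] at ht
      have := Fin.natCast_modEq_of_dvd (d := 4) ⟨m, hm⟩ (add_left_cancel ht)
      rcases ha with rfl | rfl <;> simp [Nat.ModEq, Nat.add_mod] at this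
  refine ⟨z + (0 : ℕ), z + (1 : ℕ), z + (2 : ℕ), z + (3 : ℕ), z + (4 : ℕ), z + (5 : ℕ),
    Fin.pairwise_ne_map_add_natCast z (l := [0, 1, 2, 3, 4, 5]) (k := 5) (by decide) (by decide)
      (by omega),
    cycOrd6_natCast_add z (by omega) (by omega) (by omega) (by omega) (by omega) (by omega), ?_⟩
  rcases ha with rfl | rfl
  · exact Or.inl ⟨2 * (m + 1), 2 * (m + 1) + 1, 2 * (2 * m + 1), 2 * (2 * m + 1) + 1,
      2 * (2 * m + 2), 2 * (2 * m + 2) + 1, by omega, by omega, by omega, by omega, by omega,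
      by omega, hj₀ _ 2 1 (by omega), hj₁ _ 3 1 (by omega), hj₀ _ 0 2 (by omega),
      hj₁ _ 1 2 (by omega), hj₀ _ 4 2 (by omega), hj₁ _ 5 2 (by omega)⟩
  · exact Or.inr ⟨2 * 0, 2 * 0 + 1, 2 * 1, 2 * m + 1, 2 * (m + 1), 2 * (m + 1) + 1, by omega,
      by omega, by omega, by omega, by omega, by omega, hj₀ _ 0 0 (by omega),
      hj₁ _ 3 0 (by omega), hj₀ _ 4 0 (by omega), hj₁ _ 1 1 (by omega), hj₀ _ 2 1 (by omega),
      hj₁ _ 5 1 (by omega)⟩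

end FinCyclic

/-- A cyclic order on `[n]`, `n ≥ 7`, all of whose steps are `1` or `3` mod `n`
and which is not the standard cyclic order, is `4`- or `6`-interlaced with the
standard order. -/
theorem stmt13 {n : ℕ} (hn : 7 ≤ n) (j : ℕ → Fin n)
    (hper : ∀ t, j (t + n) = j t)
    (hbij : ∀ y : Fin n, ∃! t : ℕ, t < n ∧ j t = y)
    (std : ℕ → Fin n)
    (hstd : ∀ t, std t = ⟨t % n, Nat.mod_lt t (by omega)⟩)
    (h13 : ∀ t, ((j (t + 1)).val + n - (j t).val) % n = 1 ∨
        ((j (t + 1)).val + n - (j t).val) % n = 3)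
    (hnotstd : ¬ ∃ r : ℕ, ∀ t, j t = std (t + r)) :
    (∃ a b c d : Fin n, ([a, b, c, d] : List (Fin n)).Pairwise (· ≠ ·) ∧
        CycOrd4 std a b c d ∧ CycOrd4 j c b a d) ∨
    (∃ a b c d e f : Fin n, ([a, b, c, d, e, f] : List (Fin n)).Pairwise (· ≠ ·) ∧
        CycOrd6 std a b c d e f ∧
        (CycOrd6 j c d a b e f ∨ CycOrd6 j a d e b c f)) := by
  have : NeZero n := ⟨by omega⟩
  let := Fin.instCommRing n
  obtain rfl : std = Nat.cast := funext fun t ↦ by simp [hstd, Fin.ext_iff]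
  have hsurj : Surjective j := fun y ↦ (hbij y).exists.imp fun _ ↦ And.right
  obtain ⟨σ, hσ, hstep, hj⟩ := exists_bijective_iterate (by omega) hper hbij h13
  have h2 : (2 : Fin n) ≠ 0 := by simp [Fin.ext_iff, Nat.mod_eq_of_lt (show 2 < n by omega)]
  rcases iterate_trichotomy hσ hstep h2 (Fin.natCast_self n) (j 0) with
    hone | hthree | ⟨heven, a, ha, halt⟩
  · exact absurd ⟨(j 0).val, fun t ↦ by rw [hj, hone]; simp [add_comm]⟩ hnotstd
  · exact Or.inl (interlaced_of_iterate_three hn hsurj fun t ↦ (hj t).trans (hthree t))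
  · exact Or.inr (interlaced_of_iterate_alternating hn heven hsurj ha fun k ↦ by
      rw [hj, hj (2 * k + 1)]; exact halt k)
end

section
/- Let P ⊆ H_n be an alcoved polytope, Σ_P its inner normal fan, and let C be any cone of Σ_P. For any vertex e_J of the hypersimplex Δ_{k,n}, the intersection of the translated cone (C + e_J) with Δ_{k,n} is a polytope all of whose edge directions are parallel to roots e_i − e_j; in particular, it is a matroid (generalized permutohedron) polytope. -/
open Finset

lemma levelSum_aux {n : ℕ} : ∀ (N : ℕ) (c d : Fin n → ℝ),
    (Finset.univ.image d).card ≤ N →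
    (∑ i, c i = 0) →
    (∀ t : ℝ, ∑ i ∈ Finset.univ.filter (fun p => t < d p), c i ≤ 0) →
    ∑ i, c i * d i ≤ 0 := by
  intro N
  induction N with
  | zero =>
    intro c d hcard h1 _
    have he : IsEmpty (Fin n) := by
      constructor; intro i
      have h0 : (Finset.univ.image d) = ∅ := Finset.card_eq_zero.mp (Nat.le_zero.mp hcard)
      have : d i ∈ Finset.univ.image d := Finset.mem_image_of_mem d (mem_univ i)
      rw [h0] at this; exact absurd this (Finset.notMem_empty _)
    simp
  | succ N ih =>
    intro c d hcard h1 h2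
    by_cases hconst : ∀ p q : Fin n, d p = d q
    · rcases isEmpty_or_nonempty (Fin n) with he | hne
      · simp
      · obtain ⟨p0⟩ := hne
        have heq : ∑ i, c i * d i = 0 := by
          calc ∑ i, c i * d i = ∑ i, c i * d p0 := by
                  exact Finset.sum_congr rfl fun i _ => by rw [hconst i p0]
            _ = (∑ i, c i) * d p0 := by rw [Finset.sum_mul]
            _ = 0 := by rw [h1, zero_mul]
        linarith
    · push_neg at hconst
      obtain ⟨p₁, q₁, hpq1⟩ := hconst
      have hAne : (Finset.univ.image d).Nonempty := ⟨d p₁, Finset.mem_image_of_mem d (mem_univ _)⟩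
      set A := Finset.univ.image d with hA
      set v1 := A.min' hAne with hv1
      have hv1A : v1 ∈ A := A.min'_mem hAne
      have hv1le : ∀ p, v1 ≤ d p := fun p => A.min'_le _ (Finset.mem_image_of_mem d (mem_univ p))
      have hAerasene : (A.erase v1).Nonempty := by
        rcases eq_or_ne (d p₁) v1 with h | h
        · exact ⟨d q₁, Finset.mem_erase.mpr ⟨fun hq => hpq1 (by rw [h, hq]),
            Finset.mem_image_of_mem d (mem_univ _)⟩⟩
        · exact ⟨d p₁, Finset.mem_erase.mpr ⟨h, Finset.mem_image_of_mem d (mem_univ _)⟩⟩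
      set v2 := (A.erase v1).min' hAerasene with hv2
      have hv2mem : v2 ∈ A.erase v1 := (A.erase v1).min'_mem hAerasene
      have hv2A : v2 ∈ A := Finset.mem_of_mem_erase hv2mem
      have hv12 : v1 < v2 :=
        lt_of_le_of_ne (A.min'_le _ hv2A) (Ne.symm (Finset.mem_erase.mp hv2mem).1)
      set δ := v2 - v1 with hδdef
      have hδ : 0 < δ := by simp [hδdef]; linarith
      have hdich : ∀ p, d p = v1 ∨ v2 ≤ d p := by
        intro p
        rcases eq_or_ne (d p) v1 with h | h
        · exact Or.inl h
        · exact Or.inr ((A.erase v1).min'_le _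
            (Finset.mem_erase.mpr ⟨h, Finset.mem_image_of_mem d (mem_univ p)⟩))
      set d' : Fin n → ℝ := fun p => if v1 < d p then d p - δ else d p with hd'
      have hd'eq : ∀ p, d' p = if v1 < d p then d p - δ else d p := fun p => rfl
      -- card bound
      have hcard' : (Finset.univ.image d').card ≤ N := by
        set φ : ℝ → ℝ := fun u => if v1 < u then u - δ else u with hφ
        have himg : Finset.univ.image d' = A.image φ := by
          rw [hA, Finset.image_image]; rfl
        have hsub : A.image φ = (A.erase v2).image φ := by
          apply Finset.Subset.antisymm
          · intro u hu
            obtain ⟨b, hb, hbu⟩ := Finset.mem_image.mp hu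
            rcases eq_or_ne b v2 with hbv2 | hbv
            · have hb1 : φ b = v1 := by
                rw [hbv2]
                show (if v1 < v2 then v2 - δ else v2) = v1
                rw [if_pos hv12, hδdef]; ring
              have hb2 : φ v1 = v1 := by
                show (if v1 < v1 then v1 - δ else v1) = v1
                rw [if_neg (lt_irrefl v1)]
              exact Finset.mem_image.mpr ⟨v1, Finset.mem_erase.mpr ⟨hv12.ne, hv1A⟩,
                by rw [hb2, ← hbu, hb1]⟩
            · exact Finset.mem_image.mpr ⟨b, Finset.mem_erase.mpr ⟨hbv, hb⟩, hbu⟩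
          · exact Finset.image_subset_image (Finset.erase_subset _ _)
        calc (Finset.univ.image d').card = ((A.erase v2).image φ).card := by rw [himg, hsub]
          _ ≤ (A.erase v2).card := Finset.card_image_le
          _ = A.card - 1 := Finset.card_erase_of_mem hv2A
          _ ≤ N := by omega
      have h2' : ∀ t : ℝ, ∑ i ∈ Finset.univ.filter (fun p => t < d' p), c i ≤ 0 := by
        intro t
        rcases lt_or_ge t v1 with ht | ht
        · have : Finset.univ.filter (fun p => t < d' p) = Finset.univ := by
            apply Finset.filter_true_of_mem
            intro p _
            rcases hdich p with h | h
            · rw [hd'eq]; rw [h]; simp; linarith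
            · rw [hd'eq, if_pos (by linarith : v1 < d p)]; simp [hδdef]; linarith
          rw [this]; rw [h1]
        · have : Finset.univ.filter (fun p => t < d' p) =
              Finset.univ.filter (fun p => t + δ < d p) := by
            apply Finset.filter_congr
            intro p _
            rcases hdich p with h | h
            · rw [hd'eq, h, if_neg (lt_irrefl v1)]
              constructor <;> intro hh <;> linarith
            · rw [hd'eq, if_pos (by linarith : v1 < d p)]
              constructor <;> intro hh <;> linarith
          rw [this]; exact h2 (t + δ)
      have hsplit : ∑ i, c i * d i = (∑ i, c i * d' i) +
          δ * ∑ i ∈ Finset.univ.filter (fun p => v1 < d p), c i := by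
        rw [Finset.mul_sum, Finset.sum_filter, ← Finset.sum_add_distrib]
        apply Finset.sum_congr rfl
        intro i _
        rw [hd'eq]
        by_cases h : v1 < d i
        · rw [if_pos h, if_pos h]; ring
        · rw [if_neg h, if_neg h]; ring
      rw [hsplit]
      have hle1 : ∑ i, c i * d' i ≤ 0 := ih c d' hcard' h1 h2'
      have hle2 : δ * ∑ i ∈ Finset.univ.filter (fun p => v1 < d p), c i ≤ 0 :=
        mul_nonpos_of_nonneg_of_nonpos hδ.le (h2 v1)
      linarith

lemma levelSum {n : ℕ} (c d : Fin n → ℝ)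
    (h1 : ∑ i, c i = 0)
    (h2 : ∀ t : ℝ, ∑ i ∈ Finset.univ.filter (fun p => t < d p), c i ≤ 0) :
    ∑ i, c i * d i ≤ 0 :=
  levelSum_aux (Finset.univ.image d).card c d le_rfl h1 h2

/-- The face of `P` in direction `w`: the set of points of `P` maximizing `⟨w, ·⟩`. -/
def faceOf {n : ℕ} (P : Set (Fin n → ℝ)) (w : Fin n → ℝ) : Set (Fin n → ℝ) :=
  {x ∈ P | ∀ y ∈ P, (∑ i, w i * y i) ≤ ∑ i, w i * x i}

set_option maxHeartbeats 1000000 in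
/-- Let `P` be an alcoved polytope, `C` a cone of its (inner) normal fan — the
normal cone at a point `x₀ ∈ P` — and `e_J` a vertex of the hypersimplex
`Δ_{k,n}`.  Then every edge (one-dimensional face, i.e. a face which is a
segment) of `(C + e_J) ∩ Δ_{k,n}` has direction parallel to a root `e_i - e_j`. -/
theorem stmt16 {n : ℕ} (P : Set (Fin n → ℝ)) (a : Fin n → Fin n → ℝ)
    (hP : P = {x : Fin n → ℝ | (∑ i, x i) = 0 ∧ ∀ i j, x i - x j ≤ a i j})
    (hPne : P.Nonempty) (hPbdd : Bornology.IsBounded P)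
    (C : Set (Fin n → ℝ)) (x₀ : Fin n → ℝ) (hx₀ : x₀ ∈ P)
    (hC : C = {w : Fin n → ℝ | ∀ y ∈ P, (∑ i, w i * y i) ≤ ∑ i, w i * x₀ i})
    (k : ℕ) (J : Finset (Fin n)) (hJ : J.card = k)
    (Q : Set (Fin n → ℝ))
    (hQ : Q = {x : Fin n → ℝ |
        (∃ c ∈ C, x = fun i => c i + (if i ∈ J then (1 : ℝ) else 0)) ∧
        (∀ i, 0 ≤ x i ∧ x i ≤ 1) ∧ (∑ i, x i) = (k : ℝ)})
    (w x y : Fin n → ℝ) (hxy : x ≠ y)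
    (hface : faceOf Q w = segment ℝ x y) :
    ∃ i j : Fin n, i ≠ j ∧ ∃ r : ℝ,
      y - x = r • ((Pi.single i 1 : Fin n → ℝ) - Pi.single j 1) := by
  classical
  rcases Nat.eq_zero_or_pos n with h0 | hnpos
  · subst h0; exact absurd (funext fun i => i.elim0) hxy
  have hn0 : (n : ℝ) ≠ 0 := Nat.cast_ne_zero.mpr hnpos.ne'
  rw [hP] at hx₀
  obtain ⟨hx₀sum, hx₀le⟩ := hx₀
  set χ : Fin n → ℝ := fun i => if i ∈ J then (1:ℝ) else 0 with hχ
  have hχS : ∀ S : Finset (Fin n), ∑ i ∈ S, χ i = ((S ∩ J).card : ℝ) := by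
    intro S
    rw [hχ]
    rw [Finset.sum_ite_mem]
    simp
  have hχsum : ∑ i, χ i = (k:ℝ) := by
    have := hχS Finset.univ
    rwa [Finset.univ_inter, hJ] at this
  have hxF : x ∈ faceOf Q w := by rw [hface]; exact left_mem_segment ℝ x y
  have hyF : y ∈ faceOf Q w := by rw [hface]; exact right_mem_segment ℝ x y
  have hxQ : x ∈ Q := hxF.1
  have hyQ : y ∈ Q := hyF.1
  set Up : Finset (Fin n) → Prop :=
    fun S => ∀ i j : Fin n, x₀ i - x₀ j = a i j → i ∈ S → j ∈ S with hUpdef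
  have hUpuniv : Up Finset.univ := by
    rw [hUpdef]; intro i j _ _; exact mem_univ j
  have key1 : ∀ z ∈ Q, ∀ S : Finset (Fin n), Up S →
      ∑ i ∈ S, z i ≤ ((S ∩ J).card : ℝ) := by
    intro z hz S hS
    rw [hQ] at hz
    obtain ⟨⟨c, hcC, hzc⟩, hbd, hsum⟩ := hz
    rw [hC] at hcC
    have hci : ∀ i, c i = z i - χ i := by
      intro i
      have h := congrFun hzc i
      rw [hχ]
      dsimp at h ⊢
      linarith
    have hcsum : ∑ i, c i = 0 := by
      rw [Finset.sum_congr rfl fun i _ => hci i, Finset.sum_sub_distrib, hsum, hχsum]; ring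
    -- slack
    have hne : (Finset.univ : Finset (Fin n × Fin n)).Nonempty :=
      ⟨(⟨0, hnpos⟩, ⟨0, hnpos⟩), mem_univ _⟩
    set t : ℝ := Finset.univ.inf' hne (fun ij : Fin n × Fin n =>
      if x₀ ij.1 - x₀ ij.2 = a ij.1 ij.2 then 1 else a ij.1 ij.2 - (x₀ ij.1 - x₀ ij.2)) with ht
    have htpos : 0 < t := by
      rw [ht, Finset.lt_inf'_iff]
      intro ij _
      by_cases h : x₀ ij.1 - x₀ ij.2 = a ij.1 ij.2
      · rw [if_pos h]; norm_num
      · rw [if_neg h]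
        have := hx₀le ij.1 ij.2
        have hlt : x₀ ij.1 - x₀ ij.2 < a ij.1 ij.2 := lt_of_le_of_ne this h
        linarith
    have htle : ∀ i j : Fin n, x₀ i - x₀ j ≠ a i j → t ≤ a i j - (x₀ i - x₀ j) := by
      intro i j h
      have := Finset.inf'_le (b := (i, j)) (fun ij : Fin n × Fin n =>
        if x₀ ij.1 - x₀ ij.2 = a ij.1 ij.2 then 1 else a ij.1 ij.2 - (x₀ ij.1 - x₀ ij.2))
        (mem_univ _)
      rw [if_neg h] at this
      rw [ht]; exact this
    -- perturbed point in P
    set u : Fin n → ℝ := fun i =>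
      x₀ i + t * ((if i ∈ S then (1:ℝ) else 0) - (S.card : ℝ)/n) with hu
    have hitesum : ∑ i, (if i ∈ S then (1:ℝ) else 0) = (S.card : ℝ) := by
      rw [Finset.sum_ite_mem]
      simp
    have huP : u ∈ P := by
      rw [hP]
      constructor
      · rw [hu]
        dsimp only
        rw [Finset.sum_add_distrib, ← Finset.mul_sum, Finset.sum_sub_distrib, hitesum,
          Finset.sum_const, hx₀sum]
        rw [Finset.card_univ, Fintype.card_fin, nsmul_eq_mul, ← mul_div_assoc,
          mul_div_cancel_left₀ _ hn0]
        ring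
      · intro i j
        have hui : u i - u j = x₀ i - x₀ j
            + t * ((if i ∈ S then (1:ℝ) else 0) - (if j ∈ S then (1:ℝ) else 0)) := by
          rw [hu]; dsimp only; ring
        rw [hui]
        by_cases hiS : i ∈ S
        · by_cases hjS : j ∈ S
          · rw [if_pos hiS, if_pos hjS]
            have := hx₀le i j; linarith
          · -- i ∈ S, j ∉ S : pair not tight
            rw [if_pos hiS, if_neg hjS]
            have hnt : x₀ i - x₀ j ≠ a i j := by
              intro h
              exact hjS (by rw [hUpdef] at hS; exact hS i j h hiS)
            have := htle i j hnt
            linarith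
        · rw [if_neg hiS]
          have := hx₀le i j
          by_cases hjS : j ∈ S
          · rw [if_pos hjS]; nlinarith
          · rw [if_neg hjS]; linarith
    -- apply cone inequality
    have hineq := hcC u huP
    have hexp : ∑ i, c i * u i = (∑ i, c i * x₀ i)
        + t * ((∑ i ∈ S, c i) - ((S.card : ℝ)/n) * ∑ i, c i) := by
      rw [hu]
      dsimp only
      have h1 : ∀ i : Fin n, c i * (x₀ i + t * ((if i ∈ S then (1:ℝ) else 0) - (S.card : ℝ)/n))
          = c i * x₀ i + t * ((if i ∈ S then c i else 0) - ((S.card:ℝ)/n) * c i) := by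
        intro i
        by_cases h : i ∈ S
        · rw [if_pos h, if_pos h]; ring
        · rw [if_neg h, if_neg h]; ring
      rw [Finset.sum_congr rfl fun i _ => h1 i, Finset.sum_add_distrib, ← Finset.mul_sum,
        Finset.sum_sub_distrib, ← Finset.sum_filter, ← Finset.mul_sum]
      have hfS : Finset.univ.filter (fun i => i ∈ S) = S := by ext i; simp
      rw [hfS]
    rw [hexp] at hineq
    rw [hcsum] at hineq
    have hSc : ∑ i ∈ S, c i ≤ 0 := by
      by_contra h
      push_neg at h
      nlinarith
    have hcz : ∑ i ∈ S, c i = (∑ i ∈ S, z i) - ((S ∩ J).card : ℝ) := by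
      rw [Finset.sum_congr rfl fun i _ => hci i, Finset.sum_sub_distrib, hχS]
    linarith
  have key2 : ∀ z : Fin n → ℝ, (∀ i, 0 ≤ z i ∧ z i ≤ 1) → (∑ i, z i) = (k : ℝ) →
      (∀ S : Finset (Fin n), Up S → ∑ i ∈ S, z i ≤ ((S ∩ J).card : ℝ)) → z ∈ Q := by
    intro z hbd hsum hSc
    rw [hQ]
    set c : Fin n → ℝ := fun i => z i - χ i with hc
    have hcsum : ∑ i, c i = 0 := by
      rw [hc]; dsimp only; rw [Finset.sum_sub_distrib, hsum, hχsum]; ring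
    refine ⟨⟨c, ?_, by funext i; rw [hc, hχ]; dsimp only; ring⟩, hbd, hsum⟩
    rw [hC]
    intro u huP
    rw [hP] at huP
    obtain ⟨husum, hule⟩ := huP
    set d : Fin n → ℝ := fun i => u i - x₀ i with hd
    have hlev : ∀ t : ℝ, ∑ i ∈ Finset.univ.filter (fun p => t < d p), c i ≤ 0 := by
      intro t
      set S := Finset.univ.filter (fun p => t < d p) with hSdef
      have hUpS : Up S := by
        rw [hUpdef]
        intro i j htight hi
        rw [hSdef, Finset.mem_filter] at hi ⊢
        refine ⟨mem_univ _, ?_⟩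
        have h1 : u i - u j ≤ a i j := hule i j
        have h2 : d i ≤ d j := by rw [hd]; dsimp only; linarith [htight]
        exact lt_of_lt_of_le hi.2 h2
      have h3 := hSc S hUpS
      have h4 : ∑ i ∈ S, c i = (∑ i ∈ S, z i) - ((S ∩ J).card : ℝ) := by
        rw [hc]; dsimp only; rw [Finset.sum_sub_distrib, hχS]
      linarith
    have hmain := levelSum c d hcsum hlev
    have hexp : ∑ i, c i * d i = (∑ i, c i * u i) - ∑ i, c i * x₀ i := by
      rw [hd, ← Finset.sum_sub_distrib]
      apply Finset.sum_congr rfl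
      intro i _; dsimp only; ring
    rw [hexp] at hmain
    linarith
  have hxQ' := hxQ
  have hyQ' := hyQ
  rw [hQ] at hxQ' hyQ'
  obtain ⟨-, hxbd, hxsum⟩ := hxQ'
  obtain ⟨-, hybd, hysum⟩ := hyQ'
  set m : Fin n → ℝ := fun i => (x i + y i)/2 with hm
  have hmbd : ∀ i, 0 ≤ m i ∧ m i ≤ 1 := by
    intro i; constructor
    · rw [hm]; have := (hxbd i).1; have := (hybd i).1; dsimp; linarith
    · rw [hm]; have := (hxbd i).2; have := (hybd i).2; dsimp; linarith
  have hmsum : ∑ i, m i = (k : ℝ) := by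
    rw [hm]
    have : ∑ i, (x i + y i)/2 = ((∑ i, x i) + ∑ i, y i)/2 := by
      rw [← Finset.sum_add_distrib, Finset.sum_div]
    rw [this, hxsum, hysum]; ring
  have hmS : ∀ S : Finset (Fin n), Up S → ∑ i ∈ S, m i ≤ ((S ∩ J).card : ℝ) := by
    intro S hS
    have h1 := key1 x hxQ S hS
    have h2 := key1 y hyQ S hS
    have : ∑ i ∈ S, m i = ((∑ i ∈ S, x i) + ∑ i ∈ S, y i)/2 := by
      rw [hm, ← Finset.sum_add_distrib, Finset.sum_div]
    rw [this]; linarith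
  set T : Finset (Finset (Fin n)) :=
    Finset.univ.filter (fun S => Up S ∧ ∑ i ∈ S, m i = ((S ∩ J).card : ℝ)) with hTdef
  have hTmem : ∀ S, S ∈ T ↔ (Up S ∧ ∑ i ∈ S, m i = ((S ∩ J).card : ℝ)) := by
    intro S; rw [hTdef]; simp [Finset.mem_filter]
  have hTtop : Finset.univ ∈ T := by
    rw [hTmem]
    refine ⟨hUpuniv, ?_⟩
    rw [Finset.univ_inter, hJ, hmsum]
  have hTbot : (∅ : Finset (Fin n)) ∈ T := by
    rw [hTmem]
    refine ⟨?_, by simp⟩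
    rw [hUpdef]
    exact fun i j _ h => absurd h (Finset.notMem_empty i)
  have hdT : ∀ S ∈ T, ∑ i ∈ S, (y i - x i) = 0 := by
    intro S hS
    rw [hTmem] at hS
    have h1 := key1 x hxQ S hS.1
    have h2 := key1 y hyQ S hS.1
    have h3 : ∑ i ∈ S, m i = ((∑ i ∈ S, x i) + ∑ i ∈ S, y i)/2 := by
      rw [hm, ← Finset.sum_add_distrib, Finset.sum_div]
    rw [Finset.sum_sub_distrib]
    rw [h3] at hS
    linarith [hS.2]
  have hdsum : ∑ i, (y i - x i) = 0 := by
    rw [Finset.sum_sub_distrib, hxsum, hysum]; ring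
  obtain ⟨p, hp⟩ : ∃ p, 0 < y p - x p := by
    by_contra h
    push_neg at h
    have : ∀ i ∈ Finset.univ, y i - x i = 0 :=
      (Finset.sum_eq_zero_iff_of_nonpos (fun i _ => h i)).mp hdsum
    exact hxy (funext fun i => by have := this i (mem_univ i); linarith)
  obtain ⟨q, hq, hiffpq⟩ : ∃ q, (y q - x q < 0) ∧ ∀ S ∈ T, (p ∈ S ↔ q ∈ S) := by
    have hUpInter : ∀ S S', Up S → Up S' → Up (S ∩ S') := by
      rw [hUpdef]; intro S S' h h' i j ht hi
      rw [Finset.mem_inter] at hi ⊢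
      exact ⟨h i j ht hi.1, h' i j ht hi.2⟩
    have hUpUnion : ∀ S S', Up S → Up S' → Up (S ∪ S') := by
      rw [hUpdef]; intro S S' h h' i j ht hi
      rw [Finset.mem_union] at hi ⊢
      rcases hi with hi | hi
      · exact Or.inl (h i j ht hi)
      · exact Or.inr (h' i j ht hi)
    have hcardmod : ∀ S S' : Finset (Fin n),
        (((S ∪ S') ∩ J).card : ℝ) + (((S ∩ S') ∩ J).card : ℝ)
          = ((S ∩ J).card : ℝ) + ((S' ∩ J).card : ℝ) := by
      intro S S'
      have h1 : (S ∪ S') ∩ J = (S ∩ J) ∪ (S' ∩ J) := Finset.union_inter_distrib_right S S' J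
      have h2 : (S ∩ S') ∩ J = (S ∩ J) ∩ (S' ∩ J) := by
        ext i
        simp only [Finset.mem_inter]
        tauto
      rw [h1, h2]
      rw [← Nat.cast_add, ← Nat.cast_add, Finset.card_union_add_card_inter]
    have hsummod : ∀ S S' : Finset (Fin n),
        (∑ i ∈ S ∪ S', m i) + (∑ i ∈ S ∩ S', m i) = (∑ i ∈ S, m i) + ∑ i ∈ S', m i := by
      intro S S'
      exact Finset.sum_union_inter
    have hTinter : ∀ S ∈ T, ∀ S' ∈ T, S ∩ S' ∈ T ∧ S ∪ S' ∈ T := by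
      intro S hS S' hS'
      rw [hTmem] at hS hS' ⊢
      rw [hTmem]
      have hUi := hUpInter S S' hS.1 hS'.1
      have hUu := hUpUnion S S' hS.1 hS'.1
      have b1 := hmS _ hUi
      have b2 := hmS _ hUu
      have e1 := hcardmod S S'
      have e2 := hsummod S S'
      have hs := hS.2
      have hs' := hS'.2
      constructor
      · exact ⟨hUi, by linarith⟩
      · exact ⟨hUu, by linarith⟩
    -- inf / sup closure
    have hinfT : ∀ F : Finset (Finset (Fin n)), (∀ S ∈ F, S ∈ T) → F.inf id ∈ T := by
      intro F
      induction F using Finset.induction_on with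
      | empty => intro _; simpa [Finset.inf_empty, Finset.top_eq_univ] using hTtop
      | @insert A F hA ih =>
        intro hF
        rw [Finset.inf_insert]
        have h1 : A ∈ T := hF A (Finset.mem_insert_self A F)
        have h2 : F.inf id ∈ T := ih (fun S hS => hF S (Finset.mem_insert_of_mem hS))
        exact (hTinter A h1 (F.inf id) h2).1
    have hsupT : ∀ F : Finset (Finset (Fin n)), (∀ S ∈ F, S ∈ T) → F.sup id ∈ T := by
      intro F
      induction F using Finset.induction_on with
      | empty => intro _; simpa [Finset.sup_empty, Finset.bot_eq_empty] using hTbot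
      | @insert A F hA ih =>
        intro hF
        rw [Finset.sup_insert]
        have h1 : A ∈ T := hF A (Finset.mem_insert_self A F)
        have h2 : F.sup id ∈ T := ih (fun S hS => hF S (Finset.mem_insert_of_mem hS))
        exact (hTinter A h1 (F.sup id) h2).2
    set U : Finset (Fin n) := (T.filter (fun S => p ∈ S)).inf id with hU
    set W : Finset (Fin n) := (T.filter (fun S => p ∉ S)).sup id with hW
    have hUT : U ∈ T := hinfT _ (fun S hS => (Finset.mem_filter.mp hS).1)
    have hWT : W ∈ T := hsupT _ (fun S hS => (Finset.mem_filter.mp hS).1)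
    have hMT : U ∩ W ∈ T := (hTinter U hUT W hWT).1
    have hpU : p ∈ U := by
      have h : {p} ≤ U := Finset.le_inf (fun S hS =>
        Finset.singleton_subset_iff.mpr (Finset.mem_filter.mp hS).2)
      exact Finset.singleton_subset_iff.mp h
    have hpW : p ∉ W := by
      intro hpW
      rw [hW, Finset.mem_sup] at hpW
      obtain ⟨S, hS, hpS⟩ := hpW
      exact (Finset.mem_filter.mp hS).2 hpS
    set K : Finset (Fin n) := U \ (U ∩ W) with hK
    have hpK : p ∈ K := by
      rw [hK, Finset.mem_sdiff]
      exact ⟨hpU, fun h => hpW (Finset.mem_inter.mp h).2⟩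
    have hKiff : ∀ q ∈ K, ∀ S ∈ T, (p ∈ S ↔ q ∈ S) := by
      intro q hq S hST
      rw [hK, Finset.mem_sdiff] at hq
      constructor
      · intro hpS
        have hmemf : S ∈ T.filter (fun S' => p ∈ S') := Finset.mem_filter.mpr ⟨hST, hpS⟩
        have hUS : U ≤ id S := Finset.inf_le hmemf
        exact hUS hq.1
      · intro hqS
        by_contra hpS
        have hmemf : S ∈ T.filter (fun S' => p ∉ S') := Finset.mem_filter.mpr ⟨hST, hpS⟩
        have hSW : id S ≤ W := Finset.le_sup hmemf
        exact hq.2 (Finset.mem_inter.mpr ⟨hq.1, hSW hqS⟩)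
    have hKd0 : ∑ i ∈ K, (y i - x i) = 0 := by
      rw [hK, Finset.sum_sdiff_eq_sub (Finset.inter_subset_left)]
      rw [hdT U hUT, hdT _ hMT]
      ring
    by_contra hcon
    push_neg at hcon
    have hnonneg : ∀ q ∈ K, 0 ≤ y q - x q := by
      intro q hq
      by_contra h
      push_neg at h
      obtain ⟨S, hST, hbad⟩ := hcon q h
      have hiff := hKiff q hq S hST
      rcases hbad with ⟨h1, h2⟩ | ⟨h1, h2⟩
      · exact h2 (hiff.mp h1)
      · exact h1 (hiff.mpr h2)
    have := Finset.single_le_sum hnonneg hpK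
    rw [hKd0] at this
    linarith
  have hpq_ne : p ≠ q := by intro h; rw [h] at hp; linarith
  -- strict bounds at p and q
  have hmp0 : 0 < m p := by
    rw [hm]; dsimp only; have := (hxbd p).1; linarith
  have hmp1 : m p < 1 := by
    rw [hm]; dsimp only; have := (hybd p).2; linarith
  have hmq0 : 0 < m q := by
    rw [hm]; dsimp only; have := (hybd q).1; linarith
  have hmq1 : m q < 1 := by
    rw [hm]; dsimp only; have := (hxbd q).2; linarith
  -- slack infimum over up-closed sets
  set UF : Finset (Finset (Fin n)) := Finset.univ.filter Up with hUF
  have hUFne : UF.Nonempty := ⟨Finset.univ, by rw [hUF]; exact Finset.mem_filter.mpr ⟨Finset.mem_univ _, hUpuniv⟩⟩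
  set f : Finset (Fin n) → ℝ := fun S =>
    if ∑ i ∈ S, m i = ((S ∩ J).card : ℝ) then 1 else ((S ∩ J).card : ℝ) - ∑ i ∈ S, m i
    with hf
  set s2 : ℝ := UF.inf' hUFne f with hs2
  have hs2pos : 0 < s2 := by
    rw [hs2, Finset.lt_inf'_iff]
    intro S hS
    rw [hUF, Finset.mem_filter] at hS
    rw [hf]
    dsimp only
    by_cases h : ∑ i ∈ S, m i = ((S ∩ J).card : ℝ)
    · rw [if_pos h]; norm_num
    · rw [if_neg h]
      have := hmS S hS.2
      have hlt : ∑ i ∈ S, m i < ((S ∩ J).card : ℝ) := lt_of_le_of_ne this h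
      linarith
  set s : ℝ := min (min (m p) (1 - m p)) (min (min (m q) (1 - m q)) s2) with hs
  have hspos : 0 < s := by
    rw [hs]
    refine lt_min (lt_min hmp0 (by linarith)) (lt_min (lt_min hmq0 (by linarith)) hs2pos)
  have hsmp : s ≤ 1 - m p := le_trans (min_le_left _ _) (min_le_right _ _)
  have hsmp' : s ≤ m p := le_trans (min_le_left _ _) (min_le_left _ _)
  have hsmq : s ≤ m q := le_trans (min_le_right _ _) (le_trans (min_le_left _ _) (min_le_left _ _))
  have hsmq' : s ≤ 1 - m q := le_trans (min_le_right _ _) (le_trans (min_le_left _ _) (min_le_right _ _))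
  have hss2 : s ≤ s2 := le_trans (min_le_right _ _) (min_le_right _ _)
  have hsslack : ∀ S : Finset (Fin n), Up S → ∑ i ∈ S, m i ≠ ((S ∩ J).card : ℝ) →
      s ≤ ((S ∩ J).card : ℝ) - ∑ i ∈ S, m i := by
    intro S hUpS hne
    have hSUF : S ∈ UF := by rw [hUF]; exact Finset.mem_filter.mpr ⟨Finset.mem_univ _, hUpS⟩
    have := Finset.inf'_le f hSUF
    rw [hf] at this
    dsimp only at this
    rw [if_neg hne] at this
    rw [hs2] at hss2
    exact le_trans hss2 this
  -- the perturbations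
  set δf : Fin n → ℝ := fun i => (if i = p then (1:ℝ) else 0) - (if i = q then (1:ℝ) else 0)
    with hδf
  have hδp : δf p = 1 := by rw [hδf]; dsimp only; rw [if_pos rfl, if_neg hpq_ne]; ring
  have hδq : δf q = -1 := by rw [hδf]; dsimp only; rw [if_neg (Ne.symm hpq_ne), if_pos rfl]; ring
  have hδother : ∀ i, i ≠ p → i ≠ q → δf i = 0 := by
    intro i h1 h2; rw [hδf]; dsimp only; rw [if_neg h1, if_neg h2]; ring
  have hδsum : ∑ i, δf i = 0 := by
    rw [hδf, Finset.sum_sub_distrib]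
    rw [Finset.sum_ite_eq' Finset.univ p (fun _ => (1:ℝ))]
    rw [Finset.sum_ite_eq' Finset.univ q (fun _ => (1:ℝ))]
    simp
  have hδS : ∀ S : Finset (Fin n),
      ∑ i ∈ S, δf i = (if p ∈ S then (1:ℝ) else 0) - (if q ∈ S then (1:ℝ) else 0) := by
    intro S
    rw [hδf, Finset.sum_sub_distrib]
    rw [Finset.sum_ite_eq' S p (fun _ => (1:ℝ))]
    rw [Finset.sum_ite_eq' S q (fun _ => (1:ℝ))]
  have habs : ∀ S : Finset (Fin n), |∑ i ∈ S, δf i| ≤ 1 := by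
    intro S
    rw [hδS]
    by_cases h1 : p ∈ S <;> by_cases h2 : q ∈ S <;> simp [h1, h2]
  -- membership of both perturbed points
  have hmem : ∀ ε : ℝ, |ε| ≤ s → (fun i => m i + ε * δf i) ∈ Q := by
    intro ε hε
    have hεs : -s ≤ ε ∧ ε ≤ s := abs_le.mp hε
    apply key2
    · intro i
      by_cases h1 : i = p
      · subst h1
        rw [hδp]
        constructor <;> nlinarith
      · by_cases h2 : i = q
        · subst h2
          rw [hδq]
          constructor <;> nlinarith
        · rw [hδother i h1 h2]
          have := hmbd i
          constructor <;> nlinarith [this.1, this.2]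
    · rw [Finset.sum_add_distrib, ← Finset.mul_sum, hδsum, hmsum]; ring
    · intro S hUpS
      rw [Finset.sum_add_distrib, ← Finset.mul_sum]
      by_cases hT : ∑ i ∈ S, m i = ((S ∩ J).card : ℝ)
      · have hST : S ∈ T := (hTmem S).mpr ⟨hUpS, hT⟩
        have hiff := hiffpq S hST
        have : ∑ i ∈ S, δf i = 0 := by
          rw [hδS]
          by_cases h1 : p ∈ S
          · rw [if_pos h1, if_pos (hiff.mp h1)]; ring
          · rw [if_neg h1, if_neg (fun h => h1 (hiff.mpr h))]; ring
        rw [this, hT]; linarith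
      · have h1 := hsslack S hUpS hT
        have h2 := habs S
        have : ε * ∑ i ∈ S, δf i ≤ s := by
          calc ε * ∑ i ∈ S, δf i ≤ |ε * ∑ i ∈ S, δf i| := le_abs_self _
            _ = |ε| * |∑ i ∈ S, δf i| := abs_mul _ _
            _ ≤ s * 1 := by
                apply mul_le_mul hε h2 (abs_nonneg _) (le_trans (abs_nonneg _) hε)
            _ = s := mul_one s
        linarith
  have hzQ : (fun i => m i + s * δf i) ∈ Q := hmem s (by rw [abs_of_pos hspos])
  have hz'Q : (fun i => m i + (-s) * δf i) ∈ Q := by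
    apply hmem
    rw [abs_neg, abs_of_pos hspos]
  -- face argument
  set z : Fin n → ℝ := fun i => m i + s * δf i with hz
  set z' : Fin n → ℝ := fun i => m i + (-s) * δf i with hz'
  have hwxy : ∑ i, w i * y i = ∑ i, w i * x i := le_antisymm (hxF.2 y hyQ) (hyF.2 x hxQ)
  have hsum2 : (∑ i, w i * z i) + (∑ i, w i * z' i) = (∑ i, w i * x i) + ∑ i, w i * y i := by
    rw [← Finset.sum_add_distrib, ← Finset.sum_add_distrib]
    apply Finset.sum_congr rfl
    intro i _
    rw [hz, hz', hm]
    dsimp only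
    ring
  have hle1 := hxF.2 z hzQ
  have hle2 := hxF.2 z' hz'Q
  have hwz : ∑ i, w i * z i = ∑ i, w i * x i := by linarith
  have hzF : z ∈ faceOf Q w := ⟨hzQ, fun y' hy' => le_of_le_of_eq (hxF.2 y' hy') hwz.symm⟩
  rw [hface] at hzF
  obtain ⟨α, β, hα, hβ, hαβ, hzeq⟩ := hzF
  have hzi : ∀ i, m i + s * δf i = α * x i + β * y i := by
    intro i
    have := congrFun hzeq i
    simpa [hz] using this.symm
  have hβne : β - 1/2 ≠ 0 := by
    intro hβ2
    have hβval : β = 1/2 := by linarith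
    have hαval : α = 1/2 := by linarith
    have := hzi p
    rw [hδp, hαval, hβval, hm] at this
    dsimp only at this
    linarith
  refine ⟨p, q, hpq_ne, s / (β - 1/2), ?_⟩
  funext i
  have h1 := hzi i
  have hα' : α = 1 - β := by linarith
  rw [hα', hm] at h1
  dsimp only at h1
  have hδval : δf i = (if i = p then (1:ℝ) else 0) - (if i = q then (1:ℝ) else 0) := by
    rw [hδf]
  have h2 : s * ((if i = p then (1:ℝ) else 0) - (if i = q then (1:ℝ) else 0))
      = (β - 1/2) * (y i - x i) := by
    rw [← hδval]; linarith
  simp only [Pi.sub_apply, Pi.smul_apply, Pi.single_apply, smul_eq_mul]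
  rw [div_mul_eq_mul_div, eq_div_iff hβne]
  linarith [h2]
end
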